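/- arXiv:1302.5401 — 7 statements merged into one kernel-verified Lean document; each statement's English description precedes it below -/
import Mathlib

section
/- There exist a constant c > 0 and a natural number n₀ such that for every n ≥ n₀ there is a finite connected simple graph G on n vertices and a vertex s of G with the property that every spanning subgraph H of G that is an edge FT-BFS structure for G with respect to s satisfies |E(H)| ≥ c · n^{3/2}. -/
open SimpleGraph Finset

lemma walk_level_bound {V : Type*} {G : SimpleGraph V} (φ : V → ℕ)
    (h : ∀ a b, G.Adj a b → φ b ≤ φ a + 1) {u v : V} (p : G.Walk u v) :
    φ v ≤ φ u + p.length := by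
  induction p with
  | nil => simp
  | cons hadj q ih =>
      simp only [SimpleGraph.Walk.length_cons]
      have := h _ _ hadj
      omega

section transfer
variable {α β : Type*} (f : α ≃ β) {A : SimpleGraph α} {B : SimpleGraph β}

private def thom (hAB : ∀ a b, A.Adj a b ↔ B.Adj (f a) (f b)) : A →g B :=
  ⟨f, fun {a b} h => (hAB a b).mp h⟩

private def thom' (hAB : ∀ a b, A.Adj a b ↔ B.Adj (f a) (f b)) : B →g A :=
  ⟨f.symm, fun {a b} h => (hAB _ _).mpr (by simpa using h)⟩

lemma t_reach (hAB : ∀ a b, A.Adj a b ↔ B.Adj (f a) (f b)) (u v : α) :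
    A.Reachable u v ↔ B.Reachable (f u) (f v) := by
  constructor
  · intro h
    exact h.map (thom f hAB)
  · intro h
    obtain ⟨p⟩ := h
    exact ⟨(p.map (thom' f hAB)).copy (f.symm_apply_apply u) (f.symm_apply_apply v)⟩

lemma t_dist (hAB : ∀ a b, A.Adj a b ↔ B.Adj (f a) (f b)) (u v : α) :
    A.dist u v = B.dist (f u) (f v) := by
  by_cases hr : A.Reachable u v
  · have hr' : B.Reachable (f u) (f v) := (t_reach f hAB u v).mp hr
    apply le_antisymm
    · obtain ⟨p, hp⟩ := hr'.exists_walk_length_eq_dist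
      have := SimpleGraph.dist_le (p := (p.map (thom' f hAB)).copy
        (f.symm_apply_apply u) (f.symm_apply_apply v))
      exact (this.trans_eq (SimpleGraph.Walk.length_copy _ _ _)).trans_eq
        (by rw [SimpleGraph.Walk.length_map, hp])
    · obtain ⟨p, hp⟩ := hr.exists_walk_length_eq_dist
      have := SimpleGraph.dist_le (p := p.map (thom f hAB))
      rw [SimpleGraph.Walk.length_map, hp] at this
      exact this
  · have hr' : ¬ B.Reachable (f u) (f v) := fun h => hr ((t_reach f hAB u v).mpr h)
    rw [SimpleGraph.dist_eq_zero_of_not_reachable hr,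
        SimpleGraph.dist_eq_zero_of_not_reachable hr']

lemma t_conn (hAB : ∀ a b, A.Adj a b ↔ B.Adj (f a) (f b)) (h : A.Connected) :
    B.Connected := by
  rw [SimpleGraph.connected_iff] at h ⊢
  refine ⟨fun x y => ?_, ⟨f h.2.some⟩⟩
  have h2 := (t_reach f hAB (f.symm x) (f.symm y)).mp (h.1 (f.symm x) (f.symm y))
  simpa using h2

end transfer

/-- Vertex codes: rows `a ≤ d` with `b ≤ 2*(d-a)` (row `a` is: `u_a` at `b=0`,
spoke of `u_a` ending at tip `p_a` at `b = 2*(d-a)`), and row `d+1` is the set `Z`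
of `m` extra vertices. -/
def ftS (d m : ℕ) : Finset (ℕ × ℕ) :=
  (Finset.range (d+1)).biUnion (fun a => {a} ×ˢ Finset.range (2*(d-a)+1)) ∪
    {d+1} ×ˢ Finset.range m

lemma mem_ftS {d m : ℕ} {x : ℕ × ℕ} :
    x ∈ ftS d m ↔ (x.1 ≤ d ∧ x.2 ≤ 2*(d - x.1)) ∨ (x.1 = d+1 ∧ x.2 < m) := by
  obtain ⟨a, b⟩ := x
  simp only [ftS, Finset.mem_union, Finset.mem_biUnion, Finset.mem_range,
    Finset.mem_product, Finset.mem_singleton]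
  constructor
  · rintro (⟨a', ha', rfl, hb⟩ | ⟨rfl, hb⟩) <;> omega
  · rintro (⟨ha, hb⟩ | ⟨rfl, hb⟩)
    · exact Or.inl ⟨a, by omega, rfl, by omega⟩
    · exact Or.inr ⟨rfl, hb⟩

lemma sum_odds (t : ℕ) : ∑ a ∈ Finset.range t, (2*a+1) = t^2 := by
  induction t with
  | zero => simp
  | succ t ih => rw [Finset.sum_range_succ, ih]; ring

lemma card_ftS (d m : ℕ) : (ftS d m).card = (d+1)^2 + m := by
  rw [ftS, Finset.card_union_of_disjoint, Finset.card_biUnion]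
  · have h1 : ∀ a ∈ Finset.range (d+1),
        ({a} ×ˢ Finset.range (2*(d-a)+1)).card = 2*(d-a)+1 := by
      intro a _; simp
    rw [Finset.sum_congr rfl h1]
    have h2 : ∑ a ∈ Finset.range (d+1), (2*(d-a)+1) = (d+1)^2 := by
      have := Finset.sum_range_reflect (fun a => 2*a+1) (d+1)
      rw [← sum_odds (d+1), ← this]
      apply Finset.sum_congr rfl
      intro a ha
      simp only [Finset.mem_range] at ha
      omega
    simp [h2]
  · intro a ha b hb hab
    simp only [Finset.disjoint_left, Finset.mem_product, Finset.mem_singleton]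
    rintro ⟨x, y⟩ ⟨rfl, _⟩ ⟨h, _⟩
    exact hab h
  · simp only [Finset.disjoint_left, Finset.mem_biUnion, Finset.mem_product,
      Finset.mem_singleton, Finset.mem_range]
    rintro ⟨x, y⟩ ⟨a, ha, rfl, _⟩ ⟨h, _⟩
    omega

/-- adjacency on codes (one orientation) -/
def ftR (d : ℕ) (x y : ℕ × ℕ) : Prop :=
  (x.1 ≤ d ∧ x.1 = y.1 ∧ y.2 = x.2 + 1) ∨
  (x.2 = 0 ∧ y.2 = 0 ∧ y.1 = x.1 + 1 ∧ y.1 ≤ d) ∨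
  (x.1 ≤ d ∧ x.2 = 2*(d - x.1) ∧ y.1 = d + 1)

/-- the lower-bound graph -/
def ftG (d m : ℕ) : SimpleGraph (↥(ftS d m)) where
  Adj u v := ftR d u.val v.val ∨ ftR d v.val u.val
  symm := ⟨fun u v h => h.symm⟩
  loopless := by
    constructor
    rintro ⟨⟨a, b⟩, hu⟩ (h | h) <;>
      · simp only [ftR] at h
        omega


/-- distance-from-source level function in the graph with fault `e_i` -/
def ftPhi (d i : ℕ) (x : ℕ × ℕ) : ℕ :=
  if x.1 < i then min (x.1 + x.2) (4*d+3 - (2*x.1 + x.2 + i))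
  else if x.1 ≤ d then min (3*d+3 + x.2 - (x.1 + i)) (4*d+3 - (2*x.1 + x.2 + i))
  else 2*d+2 - i

lemma ftPhi_lip (d i : ℕ) (hi1 : 1 ≤ i) (hi2 : i ≤ d) (x y : ℕ × ℕ)
    (hx : (x.1 ≤ d ∧ x.2 ≤ 2*(d - x.1)) ∨ x.1 = d+1)
    (hy : (y.1 ≤ d ∧ y.2 ≤ 2*(d - y.1)) ∨ y.1 = d+1)
    (hR : ftR d x y)
    (hne1 : ¬(x = (i-1,0) ∧ y = (i,0))) (hne2 : ¬(y = (i-1,0) ∧ x = (i,0))) :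
    ftPhi d i y ≤ ftPhi d i x + 1 ∧ ftPhi d i x ≤ ftPhi d i y + 1 := by
  obtain ⟨a, b⟩ := x
  obtain ⟨a', b'⟩ := y
  simp only [Prod.mk.injEq, not_and, ftR, ftPhi] at *
  rcases hR with h | h | h <;> split_ifs <;> omega
/-- vertex from code -/
def fV (d m a b : ℕ) (h : (a ≤ d ∧ b ≤ 2*(d - a)) ∨ (a = d+1 ∧ b < m)) : ↥(ftS d m) :=
  ⟨(a, b), mem_ftS.mpr h⟩

section walks
variable {d m i : ℕ}

/-- the graph with the `i`-th main path edge deleted -/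
def ftGi (d m i : ℕ) (hi1 : 1 ≤ i) (hi2 : i ≤ d) : SimpleGraph (↥(ftS d m)) :=
  (ftG d m).deleteEdges
    {s(fV d m (i-1) 0 (by omega), fV d m i 0 (by omega))}

lemma ftGi_adj_iff (hi1 : 1 ≤ i) (hi2 : i ≤ d) {u v : ↥(ftS d m)} :
    (ftGi d m i hi1 hi2).Adj u v ↔
      (ftR d u.val v.val ∨ ftR d v.val u.val) ∧
      ¬(u.val = (i-1,0) ∧ v.val = (i,0)) ∧ ¬(v.val = (i-1,0) ∧ u.val = (i,0)) := by
  rw [ftGi, SimpleGraph.deleteEdges_adj]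
  simp only [Set.mem_singleton_iff, Sym2.eq_iff, fV, ftG]
  rw [Subtype.ext_iff, Subtype.ext_iff, Subtype.ext_iff, Subtype.ext_iff]
  tauto

lemma ftGi_adj_of (hi1 : 1 ≤ i) (hi2 : i ≤ d) {u v : ↥(ftS d m)}
    (h1 : ftR d u.val v.val)
    (h2 : ¬(u.val = (i-1,0) ∧ v.val = (i,0)))
    (h3 : ¬(v.val = (i-1,0) ∧ u.val = (i,0))) :
    (ftGi d m i hi1 hi2).Adj u v :=
  (ftGi_adj_iff hi1 hi2).mpr ⟨Or.inl h1, h2, h3⟩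

lemma ft_colwalk (hi1 : 1 ≤ i) (hi2 : i ≤ d) :
    ∀ a (ha : a ≤ i-1), ∃ p : (ftGi d m i hi1 hi2).Walk
      (fV d m 0 0 (by omega)) (fV d m a 0 (by omega)), p.length = a := by
  intro a
  induction a with
  | zero => intro _; exact ⟨SimpleGraph.Walk.nil, rfl⟩
  | succ a ih =>
      intro ha
      obtain ⟨p, hp⟩ := ih (by omega)
      refine ⟨p.concat (ftGi_adj_of hi1 hi2 ?_ ?_ ?_), by
        rw [SimpleGraph.Walk.length_concat, hp]⟩
      · exact Or.inr (Or.inl ⟨rfl, rfl, rfl, (by omega : a + 1 ≤ d)⟩)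
      · simp only [fV, Prod.mk.injEq, not_and]
        omega
      · simp only [fV, Prod.mk.injEq, not_and]
        omega

lemma ft_rowwalk (hi1 : 1 ≤ i) (hi2 : i ≤ d) :
    ∀ b (hb : b ≤ 2*(d-(i-1))), ∃ p : (ftGi d m i hi1 hi2).Walk
      (fV d m (i-1) 0 (by omega)) (fV d m (i-1) b (by omega)), p.length = b := by
  intro b
  induction b with
  | zero => intro _; exact ⟨SimpleGraph.Walk.nil, rfl⟩
  | succ b ih =>
      intro hb
      obtain ⟨p, hp⟩ := ih (by omega)
      refine ⟨p.concat (ftGi_adj_of hi1 hi2 ?_ ?_ ?_), by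
        rw [SimpleGraph.Walk.length_concat, hp]⟩
      · exact Or.inl ⟨(by omega : i - 1 ≤ d), rfl, rfl⟩
      · simp only [fV, Prod.mk.injEq, not_and]
        omega
      · simp only [fV, Prod.mk.injEq, not_and]
        omega

lemma ft_zwalk (hi1 : 1 ≤ i) (hi2 : i ≤ d) (b : ℕ) (hb : b < m) :
    ∃ p : (ftGi d m i hi1 hi2).Walk
      (fV d m 0 0 (by omega)) (fV d m (d+1) b (by omega)), p.length = 2*d+2-i := by
  obtain ⟨p, hp⟩ := ft_colwalk (d := d) (m := m) hi1 hi2 (i-1) le_rfl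
  obtain ⟨q, hq⟩ := ft_rowwalk (d := d) (m := m) hi1 hi2 (2*(d-(i-1))) le_rfl
  refine ⟨(p.append q).concat (ftGi_adj_of hi1 hi2 ?_ ?_ ?_), ?_⟩
  · exact Or.inr (Or.inr ⟨(by omega : i - 1 ≤ d), rfl, rfl⟩)
  · simp [fV, Prod.mk.injEq, not_and]
    omega
  · simp [fV, Prod.mk.injEq, not_and]
    omega
  · rw [SimpleGraph.Walk.length_concat, SimpleGraph.Walk.length_append, hp, hq]
    omega
end walks
/-- `H` is an edge FT-BFS structure for `G` with respect to source `s`: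
`H` is a spanning subgraph of `G` and, for every edge `e` of `G` and vertex `v`,
`s` and `v` are connected in `H ∖ e` iff they are connected in `G ∖ e`, and in
that case the distances agree. -/
def IsFTBFS {V : Type*} (G H : SimpleGraph V) (s : V) : Prop :=
  H ≤ G ∧ ∀ e ∈ G.edgeSet, ∀ v : V,
    ((H.deleteEdges {e}).Reachable s v ↔ (G.deleteEdges {e}).Reachable s v) ∧
    ((G.deleteEdges {e}).Reachable s v →
      (H.deleteEdges {e}).dist s v = (G.deleteEdges {e}).dist s v)

lemma ftPhi_unique (d i b' : ℕ) (hi1 : 1 ≤ i) (hi2 : i ≤ d) (x : ℕ × ℕ)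
    (hx : (x.1 ≤ d ∧ x.2 ≤ 2*(d - x.1)) ∨ x.1 = d+1)
    (hR : ftR d x (d+1, b') ∨ ftR d (d+1, b') x)
    (hphi : ftPhi d i x + 1 ≤ 2*d+2-i) :
    x = (i-1, 2*(d-(i-1))) := by
  obtain ⟨a, b⟩ := x
  simp only [ftR, ftPhi, Prod.mk.injEq] at *
  split_ifs at hphi <;> omega

lemma ftGi_lip (d m i : ℕ) (hi1 : 1 ≤ i) (hi2 : i ≤ d) :
    ∀ u v : ↥(ftS d m), (ftGi d m i hi1 hi2).Adj u v →
      ftPhi d i v.val ≤ ftPhi d i u.val + 1 := by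
  intro u v h
  rw [ftGi_adj_iff hi1 hi2] at h
  obtain ⟨hR, h2, h3⟩ := h
  have hu : (u.val.1 ≤ d ∧ u.val.2 ≤ 2*(d - u.val.1)) ∨ u.val.1 = d+1 := by
    have := u.2; rw [mem_ftS] at this; tauto
  have hv : (v.val.1 ≤ d ∧ v.val.2 ≤ 2*(d - v.val.1)) ∨ v.val.1 = d+1 := by
    have := v.2; rw [mem_ftS] at this; tauto
  rcases hR with h | h
  · exact (ftPhi_lip d i hi1 hi2 u.val v.val hu hv h h2 h3).1
  · exact (ftPhi_lip d i hi1 hi2 v.val u.val hv hu h (by tauto) (by tauto)).2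

lemma ftPhi_source (d i : ℕ) (hi1 : 1 ≤ i) : ftPhi d i (0, 0) = 0 := by
  simp only [ftPhi]
  split_ifs <;> omega

lemma ftGi_dist_ge (d m i : ℕ) (hi1 : 1 ≤ i) (hi2 : i ≤ d) (v : ↥(ftS d m))
    (hr : (ftGi d m i hi1 hi2).Reachable (fV d m 0 0 (by omega)) v) :
    ftPhi d i v.val ≤ (ftGi d m i hi1 hi2).dist (fV d m 0 0 (by omega)) v := by
  obtain ⟨p, hp⟩ := hr.exists_walk_length_eq_dist
  have := walk_level_bound (fun w : ↥(ftS d m) => ftPhi d i w.val)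
    (ftGi_lip d m i hi1 hi2) p
  simp only [fV] at this
  rw [ftPhi_source d i hi1] at this
  exact this.trans_eq (by rw [zero_add]; exact hp)

lemma ftGi_dist_z (d m i : ℕ) (hi1 : 1 ≤ i) (hi2 : i ≤ d) (b : ℕ) (hb : b < m) :
    (ftGi d m i hi1 hi2).Reachable (fV d m 0 0 (by omega))
        (fV d m (d+1) b (by omega)) ∧
      (ftGi d m i hi1 hi2).dist (fV d m 0 0 (by omega)) (fV d m (d+1) b (by omega))
        = 2*d+2-i := by
  obtain ⟨p, hp⟩ := ft_zwalk (d := d) (m := m) hi1 hi2 b hb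
  have hr : (ftGi d m i hi1 hi2).Reachable (fV d m 0 0 (by omega))
      (fV d m (d+1) b (by omega)) := ⟨p⟩
  refine ⟨hr, le_antisymm ?_ ?_⟩
  · have := SimpleGraph.dist_le p
    omega
  · have := ftGi_dist_ge d m i hi1 hi2 _ hr
    have hphiz : ftPhi d i ((fV d m (d+1) b (by omega) : ↥(ftS d m)).val) = 2*d+2-i := by
      show ftPhi d i (d+1, b) = _
      simp only [ftPhi]
      split_ifs <;> omega
    omega
lemma ft_forced (d m : ℕ) {H : SimpleGraph ↥(ftS d m)}
    (hH : IsFTBFS (ftG d m) H (fV d m 0 0 (by omega)))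
    (i : ℕ) (hi1 : 1 ≤ i) (hi2 : i ≤ d) (b : ℕ) (hb : b < m) :
    H.Adj (fV d m (i-1) (2*(d-(i-1))) (by omega)) (fV d m (d+1) b (by omega)) := by
  set s : ↥(ftS d m) := fV d m 0 0 (by omega) with hs
  set z : ↥(ftS d m) := fV d m (d+1) b (by omega) with hz
  set eF : Sym2 ↥(ftS d m) :=
    s(fV d m (i-1) 0 (by omega), fV d m i 0 (by omega)) with heF
  have heFmem : eF ∈ (ftG d m).edgeSet := by
    rw [heF, SimpleGraph.mem_edgeSet]
    exact Or.inl (Or.inr (Or.inl ⟨rfl, rfl, (by omega : (i:ℕ) = (i-1) + 1), hi2⟩))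
  have hGi : (ftG d m).deleteEdges {eF} = ftGi d m i hi1 hi2 := rfl
  obtain ⟨hrG, hdG⟩ := ftGi_dist_z d m i hi1 hi2 b hb
  have hiff := (hH.2 eF heFmem z).1
  have hdeq := (hH.2 eF heFmem z).2
  rw [hGi] at hiff hdeq
  have hrH : (H.deleteEdges {eF}).Reachable s z := hiff.mpr hrG
  have hdH : (H.deleteEdges {eF}).dist s z = 2*d+2-i := by
    rw [hdeq hrG, hdG]
  obtain ⟨p, hp⟩ := hrH.exists_walk_length_eq_dist
  rw [hdH] at hp
  have hzs : z ≠ s := by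
    rw [hz, hs]
    intro h
    have := congrArg (fun w : ↥(ftS d m) => w.val.1) h
    simp only [fV] at this
    omega
  obtain ⟨w, hadj, q, hq⟩ := SimpleGraph.Walk.exists_eq_cons_of_ne hzs p.reverse
  have hql : q.length = 2*d+1-i := by
    have h1 : p.reverse.length = q.length + 1 := by rw [hq]; simp
    rw [SimpleGraph.Walk.length_reverse] at h1
    omega
  -- H.deleteEdges {eF} ≤ ftGi
  have hle : H.deleteEdges {eF} ≤ ftGi d m i hi1 hi2 := by
    rw [← hGi]
    intro a b' hab
    rw [SimpleGraph.deleteEdges_adj] at hab ⊢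
    exact ⟨hH.1 hab.1, hab.2⟩
  -- bound phi of w
  have hphiw : ftPhi d i w.val ≤ 2*d+1-i := by
    have hlen : (q.reverse.mapLe hle).length = 2*d+1-i := by
      simp only [SimpleGraph.Walk.mapLe, SimpleGraph.Walk.length_map,
        SimpleGraph.Walk.length_reverse]
      exact hql
    have := walk_level_bound (fun u : ↥(ftS d m) => ftPhi d i u.val)
      (ftGi_lip d m i hi1 hi2) (q.reverse.mapLe hle)
    simp only [hs, fV] at this
    rw [ftPhi_source d i hi1] at this
    omega
  -- adjacency of z and w in the big graph
  have hadjH : H.Adj z w := by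
    have := hadj
    rw [SimpleGraph.deleteEdges_adj] at this
    exact this.1
  have hadjG : (ftG d m).Adj z w := hH.1 hadjH
  have hwmem : (w.val.1 ≤ d ∧ w.val.2 ≤ 2*(d - w.val.1)) ∨ w.val.1 = d+1 := by
    have := w.2; rw [mem_ftS] at this; tauto
  have hzval : z.val = (d+1, b) := rfl
  have hwval : w.val = (i-1, 2*(d-(i-1))) := by
    apply ftPhi_unique d i b hi1 hi2 w.val hwmem
    · rcases hadjG with h | h
      · right; rw [← hzval]; exact h
      · left; rw [← hzval]; exact h
    · omega
  have hweq : w = fV d m (i-1) (2*(d-(i-1))) (by omega) := Subtype.ext hwval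
  rw [← hweq]
  exact hadjH.symm
lemma ftG_reach_row (d m a : ℕ) (ha : a ≤ d) :
    ∀ b (hb : b ≤ 2*(d-a)),
      (ftG d m).Reachable (fV d m a b (by omega)) (fV d m a 0 (by omega)) := by
  intro b
  induction b with
  | zero => intro _; rfl
  | succ b ih =>
      intro hb
      have hadj : (ftG d m).Adj (fV d m a b (by omega)) (fV d m a (b+1) (by omega)) :=
        Or.inl (Or.inl ⟨ha, rfl, rfl⟩)
      exact hadj.symm.reachable.trans (ih (by omega))

lemma ftG_reach_col (d m : ℕ) :
    ∀ a (ha : a ≤ d),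
      (ftG d m).Reachable (fV d m a 0 (by omega)) (fV d m 0 0 (by omega)) := by
  intro a
  induction a with
  | zero => intro _; rfl
  | succ a ih =>
      intro ha
      have hadj : (ftG d m).Adj (fV d m a 0 (by omega)) (fV d m (a+1) 0 (by omega)) :=
        Or.inl (Or.inr (Or.inl ⟨rfl, rfl, rfl, ha⟩))
      exact hadj.symm.reachable.trans (ih (by omega))

lemma ftG_conn (d m : ℕ) (hm : 1 ≤ m) : (ftG d m).Connected := by
  rw [SimpleGraph.connected_iff_exists_forall_reachable]
  refine ⟨fV d m 0 0 (by omega), fun w => ?_⟩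
  refine (?_ : (ftG d m).Reachable w (fV d m 0 0 (by omega))).symm
  obtain ⟨⟨a, b⟩, hw⟩ := w
  rw [mem_ftS] at hw
  rcases hw with ⟨ha, hb⟩ | ⟨ha, hb⟩
  · have h1 := ftG_reach_row d m a ha b hb
    have h2 := ftG_reach_col d m a ha
    have : (⟨(a, b), mem_ftS.mpr (Or.inl ⟨ha, hb⟩)⟩ : ↥(ftS d m)) =
        fV d m a b (by omega) := rfl
    rw [this]
    exact h1.trans h2
  · subst ha
    have hadj : (ftG d m).Adj (fV d m d 0 (by omega))
        (⟨(d+1, b), mem_ftS.mpr (Or.inr ⟨rfl, hb⟩)⟩) :=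
      Or.inl (Or.inr (Or.inr ⟨le_rfl, by simp [fV], rfl⟩))
    exact hadj.symm.reachable.trans (ftG_reach_col d m d le_rfl)

lemma isFTBFS_comap {α β : Type*} (f : α ≃ β) (G' H' : SimpleGraph β) (s : α)
    (h : IsFTBFS G' H' (f s)) : IsFTBFS (G'.comap ⇑f) (H'.comap ⇑f) s := by
  obtain ⟨hle, hmain⟩ := h
  constructor
  · intro a b hab
    exact hle hab
  · intro ε hε v
    have hε' : Sym2.map f ε ∈ G'.edgeSet := by
      induction ε with
      | _ a b =>
          rw [SimpleGraph.mem_edgeSet] at hε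
          rw [Sym2.map_pair_eq, SimpleGraph.mem_edgeSet]
          exact hε
    have key : ∀ (B : SimpleGraph β) (a b : α),
        ((B.comap ⇑f).deleteEdges {ε}).Adj a b ↔
          (B.deleteEdges {Sym2.map f ε}).Adj (f a) (f b) := by
      intro B a b
      rw [SimpleGraph.deleteEdges_adj, SimpleGraph.deleteEdges_adj]
      simp only [SimpleGraph.comap_adj, Set.mem_singleton_iff]
      constructor
      · rintro ⟨h1, h2⟩
        refine ⟨h1, fun hc => h2 ?_⟩
        have := Sym2.map.injective f.injective (a₁ := s(a, b)) (a₂ := ε)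
        rw [Sym2.map_pair_eq] at this
        exact this hc
      · rintro ⟨h1, h2⟩
        refine ⟨h1, fun hc => h2 ?_⟩
        rw [← Sym2.map_pair_eq, hc]
    obtain ⟨hiff, hdist⟩ := hmain (Sym2.map f ε) hε' (f v)
    have tG := fun u w => (key G' u w)
    have tH := fun u w => (key H' u w)
    constructor
    · rw [t_reach f tH s v, t_reach f tG s v]
      exact hiff
    · intro hr
      rw [t_dist f tH s v, t_dist f tG s v]
      exact hdist ((t_reach f tG s v).mp hr)
/-- There exist `c > 0` and `n₀` such that for every `n ≥ n₀` there is a connected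
graph `G` on `n` vertices and a source `s` so that every edge FT-BFS structure for
`G` w.r.t. `s` has at least `c · n^{3/2}` edges. -/
theorem ftbfs_lower_bound :
    ∃ c : ℝ, 0 < c ∧ ∃ n₀ : ℕ, ∀ n : ℕ, n₀ ≤ n →
      ∃ (G : SimpleGraph (Fin n)) (s : Fin n), G.Connected ∧
        ∀ H : SimpleGraph (Fin n), IsFTBFS G H s →
          c * (n : ℝ) ^ ((3 : ℝ) / 2) ≤ (H.edgeSet.ncard : ℝ) := by
  refine ⟨1/32, by norm_num, 100, fun n hn => ?_⟩
  -- choose parameters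
  set s0 := Nat.sqrt n with hs0def
  have hs0 : 10 ≤ s0 := Nat.le_sqrt.mpr (by omega)
  have hs0sq : s0 * s0 ≤ n := by have := Nat.sqrt_le' n; nlinarith [this]
  have hup : n < (s0 + 1) * (s0 + 1) := by
    have := Nat.lt_succ_sqrt' n
    have h2 : n.sqrt.succ ^ 2 = (n.sqrt + 1) * (n.sqrt + 1) := by
      rw [Nat.succ_eq_add_one]; ring
    rw [h2] at this
    exact this
  set t := s0 / 2 with htdef
  set d := t - 1 with hddef
  have htd : t = d + 1 := by omega
  have h2t : 2 * t ≤ s0 := by omega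
  have h4t : 4 * (t * t) ≤ n := by
    have := Nat.mul_le_mul h2t h2t
    calc 4 * (t * t) = (2*t) * (2*t) := by ring
    _ ≤ s0 * s0 := Nat.mul_le_mul h2t h2t
    _ ≤ n := hs0sq
  set m := n - t * t with hmdef
  have hd1 : 1 ≤ d := by omega
  have hm1 : 1 ≤ m := by omega
  have hcard : Fintype.card ↥(ftS d m) = n := by
    rw [Fintype.card_coe, card_ftS]
    have : (d+1)^2 = t * t := by rw [← htd]; ring
    omega
  set f := Fintype.equivFinOfCardEq hcard with hfdef
  set G' := (ftG d m).comap ⇑f.symm with hG'def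
  have hAB : ∀ a b : ↥(ftS d m), (ftG d m).Adj a b ↔ G'.Adj (f a) (f b) := by
    intro a b
    rw [hG'def]
    simp [SimpleGraph.comap_adj, Equiv.symm_apply_apply]
  set sV : ↥(ftS d m) := fV d m 0 0 (by omega) with hsVdef
  refine ⟨G', f sV, t_conn f hAB (ftG_conn d m hm1), ?_⟩
  intro H' hH'
  -- pull back H'
  have hGG : ftG d m = G'.comap ⇑f := by
    ext a b
    rw [hG'def]
    simp [SimpleGraph.comap_adj, Equiv.symm_apply_apply]
  have hHv : IsFTBFS (ftG d m) (H'.comap ⇑f) sV := by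
    rw [hGG]
    exact isFTBFS_comap f G' H' sV hH'
  -- forced edges
  have hforced : ∀ (x : Fin d) (y : Fin m),
      H'.Adj (f (fV d m x.val (2*(d-x.val)) (Or.inl ⟨by omega, le_rfl⟩)))
             (f (fV d m (d+1) y.val (Or.inr ⟨rfl, y.2⟩))) := by
    intro x y
    have := ft_forced d m hHv (x.val + 1) (by omega) (by omega) y.val y.2
    have hev : (x.val + 1) - 1 = x.val := rfl
    have heq : (fV d m ((x.val+1)-1) (2*(d-((x.val+1)-1)))
        (by omega) : ↥(ftS d m)) = fV d m x.val (2*(d-x.val)) (Or.inl ⟨by omega, le_rfl⟩) := by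
      apply Subtype.ext
      simp [fV]
    have heq2 : (fV d m (d+1) y.val (by omega) : ↥(ftS d m)) =
        fV d m (d+1) y.val (Or.inr ⟨rfl, y.2⟩) := rfl
    rw [heq, heq2] at this
    exact this
  -- counting
  set inj : Fin d × Fin m → Sym2 (Fin n) := fun x =>
    s(f (fV d m x.1.val (2*(d-x.1.val)) (Or.inl ⟨by omega, le_rfl⟩)),
      f (fV d m (d+1) x.2.val (Or.inr ⟨rfl, x.2.2⟩))) with hinjdef
  have hinj : Function.Injective inj := by
    rintro ⟨x1, x2⟩ ⟨y1, y2⟩ h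
    rw [hinjdef] at h
    simp only [Sym2.eq_iff, Equiv.apply_eq_iff_eq] at h
    rcases h with ⟨h1, h2⟩ | ⟨h1, h2⟩
    · rw [Subtype.ext_iff] at h1 h2
      simp only [fV, Prod.mk.injEq] at h1 h2
      exact Prod.ext (Fin.ext h1.1) (Fin.ext h2.2)
    · rw [Subtype.ext_iff] at h1
      simp only [fV, Prod.mk.injEq] at h1
      have := x1.2
      omega
  have hsub : Set.range inj ⊆ H'.edgeSet := by
    rintro _ ⟨x, rfl⟩
    rw [hinjdef]
    exact hforced x.1 x.2
  have hcount : d * m ≤ (H'.edgeSet).ncard := by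
    have h1 : (Set.range inj).ncard = d * m := by
      rw [← Set.image_univ, Set.ncard_image_of_injective _ hinj, Set.ncard_univ,
        Nat.card_eq_fintype_card, Fintype.card_prod, Fintype.card_fin, Fintype.card_fin]
    rw [← h1]
    exact Set.ncard_le_ncard hsub (Set.toFinite _)
  -- numerics
  have h4d : s0 + 1 ≤ 4 * d := by omega
  have h4m : 3 * n ≤ 4 * m := by omega
  have hkey : n * (s0 + 1) ≤ 16 * (d * m) := by
    calc n * (s0 + 1) ≤ (4*m) * (4*d) := Nat.mul_le_mul (by omega) h4d
    _ = 16 * (d * m) := by ring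
  have hx0 : (0:ℝ) ≤ (n:ℝ) := by positivity
  have hrw : (n:ℝ) ^ ((3:ℝ)/2) = (n:ℝ) * Real.sqrt n := by
    rw [show (3:ℝ)/2 = 1 + 1/2 by norm_num, Real.rpow_add (by positivity), Real.rpow_one,
      Real.sqrt_eq_rpow]
  have hsqrt : Real.sqrt n ≤ (s0:ℝ) + 1 := by
    have hle : (n:ℝ) ≤ ((s0:ℝ)+1)^2 := by
      have : (n:ℝ) ≤ ((s0+1) * (s0+1) : ℕ) := by exact_mod_cast hup.le
      push_cast at this
      nlinarith [this]
    calc Real.sqrt n ≤ Real.sqrt (((s0:ℝ)+1)^2) := Real.sqrt_le_sqrt hle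
    _ = (s0:ℝ)+1 := Real.sqrt_sq (by positivity)
  have hchain : (n:ℝ) * Real.sqrt n ≤ 16 * ((d*m : ℕ) : ℝ) := by
    calc (n:ℝ) * Real.sqrt n ≤ (n:ℝ) * ((s0:ℝ)+1) := by
          apply mul_le_mul_of_nonneg_left hsqrt hx0
    _ = ((n * (s0+1) : ℕ) : ℝ) := by push_cast; ring
    _ ≤ ((16 * (d*m) : ℕ) : ℝ) := by exact_mod_cast hkey
    _ = 16 * ((d*m : ℕ) : ℝ) := by push_cast; ring
  have hfin : ((d*m : ℕ) : ℝ) ≤ ((H'.edgeSet.ncard : ℕ) : ℝ) := by exact_mod_cast hcount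
  rw [hrw]
  nlinarith [hchain, hfin]
end

section
/- There exists a constant c > 0 such that for every integer σ ≥ 1 there is a natural number n₀ with the following property: for every n ≥ n₀ there exist a finite connected simple graph G on n vertices and a set S of σ vertices of G such that every spanning subgraph H of G that is an edge FT-MBFS structure for G with respect to S satisfies |E(H)| ≥ c · √σ · n^{3/2}. -/
set_option maxHeartbeats 1600000


open SimpleGraph

namespace FTaux



variable {α β : Type*}

lemma walk_phi_le {Γ : SimpleGraph α} {φ : α → ℕ}
    (h : ∀ a b, Γ.Adj a b → φ b ≤ φ a + 1) {u v : α} (w : Γ.Walk u v) :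
    φ v ≤ φ u + w.length := by
  induction w with
  | nil => simp
  | cons h' p ih =>
    have h1 := h _ _ h'
    simp only [SimpleGraph.Walk.length_cons]
    omega

lemma phi_le_dist {Γ : SimpleGraph α} {φ : α → ℕ}
    (h : ∀ a b, Γ.Adj a b → φ b ≤ φ a + 1) {u v : α} (hr : Γ.Reachable u v)
    (h0 : φ u = 0) : φ v ≤ Γ.dist u v := by
  obtain ⟨w, hw⟩ := hr.exists_walk_length_eq_dist
  have := walk_phi_le h w
  omega

lemma iso_reachable {A : SimpleGraph α} {B : SimpleGraph β} (φ : A ≃g B) {u v : α} :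
    A.Reachable u v ↔ B.Reachable (φ u) (φ v) := by
  constructor
  · rintro ⟨w⟩
    exact ⟨w.map φ.toHom⟩
  · rintro ⟨w⟩
    have h : A.Reachable (φ.symm (φ u)) (φ.symm (φ v)) := ⟨w.map φ.symm.toHom⟩
    simpa using h

lemma iso_dist {A : SimpleGraph α} {B : SimpleGraph β} (φ : A ≃g B) (u v : α) :
    A.dist u v = B.dist (φ u) (φ v) := by
  by_cases hr : A.Reachable u v
  · have hr' : B.Reachable (φ u) (φ v) := (iso_reachable φ).mp hr
    apply le_antisymm
    · obtain ⟨w, hw⟩ := hr'.exists_walk_length_eq_dist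
      have h2 : A.dist (φ.symm (φ u)) (φ.symm (φ v)) ≤ (w.map φ.symm.toHom).length :=
        dist_le _
      rw [SimpleGraph.Walk.length_map] at h2
      simpa [hw] using h2
    · obtain ⟨w, hw⟩ := hr.exists_walk_length_eq_dist
      have h2 : B.dist (φ u) (φ v) ≤ (w.map φ.toHom).length := dist_le _
      rw [SimpleGraph.Walk.length_map] at h2
      omega
  · have hr' : ¬ B.Reachable (φ u) (φ v) := fun h => hr ((iso_reachable φ).mpr h)
    rw [SimpleGraph.dist_eq_zero_of_not_reachable hr,
      SimpleGraph.dist_eq_zero_of_not_reachable hr']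

lemma comap_equiv_reachable (f : α ≃ β) (G : SimpleGraph β) {a b : α} :
    (G.comap f).Reachable a b ↔ G.Reachable (f a) (f b) :=
  iso_reachable (SimpleGraph.Iso.comap f G)

lemma comap_equiv_dist (f : α ≃ β) (G : SimpleGraph β) (a b : α) :
    (G.comap f).dist a b = G.dist (f a) (f b) :=
  iso_dist (SimpleGraph.Iso.comap f G) a b

lemma comap_equiv_connected (f : α ≃ β) {G : SimpleGraph β} (h : G.Connected) :
    (G.comap f).Connected := by
  rw [connected_iff]
  refine ⟨fun a b => (comap_equiv_reachable f G).mpr (h.preconnected _ _), ⟨f.symm h.nonempty.some⟩⟩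

lemma comap_equiv_deleteEdges (f : α ≃ β) (G : SimpleGraph β) (e : Sym2 β) :
    (G.comap f).deleteEdges {Sym2.map f.symm e} = (G.deleteEdges {e}).comap f := by
  ext a b
  simp only [SimpleGraph.deleteEdges_adj, SimpleGraph.comap_adj, Set.mem_singleton_iff]
  constructor
  · rintro ⟨h1, h2⟩
    refine ⟨h1, fun hc => h2 ?_⟩
    rw [← hc]
    simp [Sym2.map_pair_eq]
  · rintro ⟨h1, h2⟩
    refine ⟨h1, fun hc => h2 ?_⟩
    have h3 := congrArg (Sym2.map f) hc
    simp only [Sym2.map_pair_eq, Sym2.map_map, Equiv.self_comp_symm, Sym2.map_id, id] at h3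
    simpa using h3




variable {α : Type*}

lemma walk_last_edge {Γ : SimpleGraph α} :
    ∀ {u v : α} (w : Γ.Walk u v), w.length ≠ 0 →
      ∃ (y : α) (p : Γ.Walk u y), Γ.Adj y v ∧ p.length + 1 = w.length := by
  intro u v w
  induction w with
  | nil => simp
  | @cons a b c h' p ih =>
    intro _
    cases p with
    | nil => exact ⟨a, SimpleGraph.Walk.nil, h', by simp⟩
    | @cons b c' d h'' q =>
      obtain ⟨y, pp, hadj, hlen⟩ := ih (by simp)
      refine ⟨y, SimpleGraph.Walk.cons h' pp, hadj, ?_⟩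
      simp only [SimpleGraph.Walk.length_cons] at *
      omega

section Construction

variable (σ m K : ℕ)

abbrev Vt := (Fin σ × (Fin (m+1) ⊕ Fin m × Fin (2*m-1))) ⊕ Fin K

variable {σ m K}

abbrev sp (k : Fin σ) (t : Fin (m+1)) : Vt σ m K := Sum.inl (k, Sum.inl t)
abbrev tl (k : Fin σ) (i : Fin m) (p : Fin (2*m-1)) : Vt σ m K := Sum.inl (k, Sum.inr (i, p))
abbrev zz (r : Fin K) : Vt σ m K := Sum.inr r

inductive Rel : Vt σ m K → Vt σ m K → Prop
  | spine (k : Fin σ) (t t' : Fin (m+1)) (h : t'.val = t.val + 1) :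
      Rel (Sum.inl (k, Sum.inl t)) (Sum.inl (k, Sum.inl t'))
  | attach (k : Fin σ) (t : Fin (m+1)) (i : Fin m) (p : Fin (2*m-1))
      (h : t.val = i.val + 1) (hp : p.val = 0) :
      Rel (Sum.inl (k, Sum.inl t)) (Sum.inl (k, Sum.inr (i, p)))
  | tail (k : Fin σ) (i : Fin m) (p p' : Fin (2*m-1)) (h : p'.val = p.val + 1) :
      Rel (Sum.inl (k, Sum.inr (i, p))) (Sum.inl (k, Sum.inr (i, p')))
  | cross (k : Fin σ) (i : Fin m) (p : Fin (2*m-1)) (r : Fin K)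
      (h : p.val = 2*(m-1-i.val)) :
      Rel (Sum.inl (k, Sum.inr (i, p))) (Sum.inr r)

variable (σ m K) in
def Gr : SimpleGraph (Vt σ m K) where
  Adj a b := Rel a b ∨ Rel b a
  symm := ⟨fun a b h => h.symm⟩
  loopless := ⟨fun a h => by
    rcases h with h | h <;>
    · cases h with
      | spine k t t' h => omega
      | tail k i p p' h => omega⟩

lemma gr_adj {a b : Vt σ m K} : (Gr σ m K).Adj a b ↔ Rel a b ∨ Rel b a := Iff.rfl

end Construction


variable {σ m K : ℕ}

def phi (k : Fin σ) (j : ℕ) : Vt σ m K → ℕ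
  | Sum.inl (k', Sum.inl t) =>
      if k' = k then (if t.val < j then t.val else 2*m-j+3) else 2*m-j+3
  | Sum.inl (k', Sum.inr (i, p)) =>
      if k' = k then
        (if i.val + 1 < j then min (2*m-j+3) (i.val + 2 + p.val) else 2*m-j+3)
      else 2*m-j+3
  | Sum.inr _ => 2*m-j+3

def fedge (k : Fin σ) (j : ℕ) (hjm : j ≤ m) : Sym2 (Vt σ m K) :=
  s(Sum.inl (k, Sum.inl ⟨j-1, by omega⟩), Sum.inl (k, Sum.inl ⟨j, by omega⟩))

lemma fedge_mem (k : Fin σ) {j : ℕ} (hj2 : 2 ≤ j) (hjm : j ≤ m) :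
    fedge (K := K) k j hjm ∈ (Gr σ m K).edgeSet := by
  simp only [fedge, SimpleGraph.mem_edgeSet]
  exact Or.inl (Rel.spine k _ _ (by simp; omega))

lemma phi_lip (k : Fin σ) {j : ℕ} (hj2 : 2 ≤ j) (hjm : j ≤ m) :
    ∀ a b, ((Gr σ m K).deleteEdges {fedge k j hjm}).Adj a b →
      phi k j b ≤ phi k j a + 1 := by
  have key : ∀ a b, Rel a b → s(a,b) ≠ fedge (K := K) k j hjm →
      phi k j b ≤ phi k j a + 1 ∧ phi k j a ≤ phi k j b + 1 := by
    intro a b hR hne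
    cases hR with
    | spine k' t t' h =>
      rcases eq_or_ne k' k with hk | hk
      · subst hk
        have hcon : ¬(t.val = j-1 ∧ t'.val = j) := by
          rintro ⟨h1, h2⟩
          apply hne
          have hp1 : j - 1 < m + 1 := by omega
          have hp2 : j < m + 1 := by omega
          have ht : t = ⟨j-1, hp1⟩ := Fin.ext h1
          have ht' : t' = ⟨j, hp2⟩ := Fin.ext h2
          subst ht
          subst ht'
          rfl
        simp only [phi, if_pos rfl]
        split_ifs <;> omega
      · simp only [phi, if_neg hk]
        omega
    | attach k' t i p h hp =>
      rcases eq_or_ne k' k with hk | hk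
      · subst hk
        simp only [phi, if_pos rfl]
        have := i.isLt
        split_ifs <;> omega
      · simp only [phi, if_neg hk]; omega
    | tail k' i p p' h =>
      rcases eq_or_ne k' k with hk | hk
      · subst hk
        simp only [phi, if_pos rfl]
        split_ifs <;> omega
      · simp only [phi, if_neg hk]; omega
    | cross k' i p r h =>
      rcases eq_or_ne k' k with hk | hk
      · subst hk
        simp only [phi, if_pos rfl]
        have := i.isLt
        split_ifs <;> omega
      · simp only [phi, if_neg hk]; omega
  intro a b hadj
  rw [SimpleGraph.deleteEdges_adj, Set.mem_singleton_iff] at hadj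
  obtain ⟨hab, hne⟩ := hadj
  rcases hab with h | h
  · exact (key a b h hne).1
  · refine (key b a h ?_).2
    rw [Sym2.eq_swap] at hne
    exact hne


section Scenario

variable {σ m K : ℕ}

abbrev src (k : Fin σ) : Vt σ m K := Sum.inl (k, Sum.inl ⟨0, Nat.succ_pos m⟩)

def xi {j : ℕ} (hj2 : 2 ≤ j) (hjm : j ≤ m) : Fin m := ⟨j-2, by omega⟩

def xpos {j : ℕ} (hj2 : 2 ≤ j) (hjm : j ≤ m) : Fin (2*m-1) := ⟨2*(m-1-(j-2)), by omega⟩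

def xvert (k : Fin σ) {j : ℕ} (hj2 : 2 ≤ j) (hjm : j ≤ m) : Vt σ m K :=
  Sum.inl (k, Sum.inr (xi hj2 hjm, xpos hj2 hjm))

lemma phi_src (k : Fin σ) {j : ℕ} (hj2 : 2 ≤ j) : phi (m := m) (K := K) k j (src k) = 0 := by
  simp only [phi, src, if_pos rfl]
  split_ifs <;> omega

lemma phi_z (k : Fin σ) {j : ℕ} (r : Fin K) :
    phi (σ := σ) (m := m) k j (Sum.inr r) = 2*m-j+3 := rfl

lemma spine_walk (k : Fin σ) {j : ℕ} (hj2 : 2 ≤ j) (hjm : j ≤ m) :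
    ∀ t, (ht : t ≤ j - 1) → ∃ w : ((Gr σ m K).deleteEdges {fedge k j hjm}).Walk (src k)
      (Sum.inl (k, Sum.inl ⟨t, by omega⟩)), w.length = t := by
  intro t
  induction t with
  | zero => exact fun _ => ⟨SimpleGraph.Walk.nil, rfl⟩
  | succ t ih =>
    intro ht
    obtain ⟨w, hw⟩ := ih (by omega)
    have hadj : ((Gr σ m K).deleteEdges {fedge k j hjm}).Adj
        (Sum.inl (k, Sum.inl ⟨t, by omega⟩)) (Sum.inl (k, Sum.inl ⟨t+1, by omega⟩)) := by
      rw [SimpleGraph.deleteEdges_adj]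
      refine ⟨Or.inl (Rel.spine k _ _ (by simp)), ?_⟩
      simp only [Set.mem_singleton_iff, fedge, Sym2.eq_iff, Sum.inl.injEq,
        Prod.mk.injEq, Fin.mk.injEq]
      omega
    exact ⟨w.concat hadj, by simp [SimpleGraph.Walk.length_concat, hw]⟩

lemma tail_walk (k : Fin σ) {j : ℕ} (hj2 : 2 ≤ j) (hjm : j ≤ m) (i : Fin m) (h0 : 0 < 2*m-1) :
    ∀ q, (hq : q < 2*m - 1) → ∃ w : ((Gr σ m K).deleteEdges {fedge k j hjm}).Walk
      (Sum.inl (k, Sum.inr (i, ⟨0, h0⟩))) (Sum.inl (k, Sum.inr (i, ⟨q, hq⟩))), w.length = q := by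
  intro q
  induction q with
  | zero => exact fun _ => ⟨SimpleGraph.Walk.nil, rfl⟩
  | succ q ih =>
    intro hq
    obtain ⟨w, hw⟩ := ih (by omega)
    have hadj : ((Gr σ m K).deleteEdges {fedge k j hjm}).Adj
        (Sum.inl (k, Sum.inr (i, ⟨q, by omega⟩))) (Sum.inl (k, Sum.inr (i, ⟨q+1, hq⟩))) := by
      rw [SimpleGraph.deleteEdges_adj]
      refine ⟨Or.inl (Rel.tail k i _ _ (by simp)), ?_⟩
      simp [Set.mem_singleton_iff, fedge, Sym2.eq_iff]
    exact ⟨w.concat hadj, by simp [SimpleGraph.Walk.length_concat, hw]⟩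

lemma exists_walk_z (k : Fin σ) {j : ℕ} (hj2 : 2 ≤ j) (hjm : j ≤ m) (r : Fin K) :
    ∃ w : ((Gr σ m K).deleteEdges {fedge k j hjm}).Walk (src k) (Sum.inr r),
      w.length = 2*m - j + 3 := by
  have h0 : 0 < 2*m-1 := by omega
  obtain ⟨w1, hw1⟩ := spine_walk (K := K) k hj2 hjm (j-1) le_rfl
  obtain ⟨w2, hw2⟩ := tail_walk (K := K) k hj2 hjm (xi hj2 hjm) h0 (2*(m-1-(j-2))) (by omega)
  have hA : ((Gr σ m K).deleteEdges {fedge k j hjm}).Adj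
      (Sum.inl (k, Sum.inl ⟨j-1, by omega⟩)) (Sum.inl (k, Sum.inr (xi hj2 hjm, ⟨0, h0⟩))) := by
    rw [SimpleGraph.deleteEdges_adj]
    refine ⟨Or.inl (Rel.attach k _ _ _ (by simp [xi]; omega) rfl), ?_⟩
    simp [Set.mem_singleton_iff, fedge, Sym2.eq_iff]
  have hC : ((Gr σ m K).deleteEdges {fedge k j hjm}).Adj
      (Sum.inl (k, Sum.inr (xi hj2 hjm, ⟨2*(m-1-(j-2)), by omega⟩))) (Sum.inr r : Vt σ m K) := by
    rw [SimpleGraph.deleteEdges_adj]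
    refine ⟨Or.inl (Rel.cross k _ _ r (by simp [xi])), ?_⟩
    simp [Set.mem_singleton_iff, fedge, Sym2.eq_iff]
  refine ⟨((w1.concat hA).append w2).concat hC, ?_⟩
  simp [SimpleGraph.Walk.length_concat, SimpleGraph.Walk.length_append, hw1, hw2]
  omega

lemma dist_z (k : Fin σ) {j : ℕ} (hj2 : 2 ≤ j) (hjm : j ≤ m) (r : Fin K) :
    ((Gr σ m K).deleteEdges {fedge k j hjm}).dist (src k) (Sum.inr r) = 2*m - j + 3 ∧
    ((Gr σ m K).deleteEdges {fedge k j hjm}).Reachable (src k) (Sum.inr r) := by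
  obtain ⟨w, hw⟩ := exists_walk_z k hj2 hjm r
  have hreach : ((Gr σ m K).deleteEdges {fedge k j hjm}).Reachable (src k) (Sum.inr r) := ⟨w⟩
  refine ⟨le_antisymm (hw ▸ dist_le w) ?_, hreach⟩
  have := phi_le_dist (phi_lip k hj2 hjm) hreach (phi_src k hj2)
  simpa [phi_z] using this

lemma z_pred (k : Fin σ) {j : ℕ} (hj2 : 2 ≤ j) (hjm : j ≤ m) (r : Fin K) (y : Vt σ m K)
    (hadj : (Gr σ m K).Adj y (Sum.inr r))
    (w : ((Gr σ m K).deleteEdges {fedge k j hjm}).Walk (src k) y)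
    (hlen : w.length + 1 ≤ 2*m - j + 3) :
    y = xvert k hj2 hjm := by
  have hphi : phi k j y ≤ w.length := by
    have := walk_phi_le (phi_lip k hj2 hjm) w
    rw [phi_src k hj2] at this
    omega
  rcases hadj with h | h
  · cases h with
    | cross k' i p r h =>
      rcases eq_or_ne k' k with hk | hk
      · subst hk
        have hi := i.isLt
        by_cases h1 : i.val + 1 < j
        · simp only [phi, if_pos rfl, if_pos h1, eq_self_iff_true, if_true] at hphi
          have hiv : i.val = j - 2 := by omega
          have hpv : p.val = 2*(m-1-(j-2)) := by omega
          have : i = xi hj2 hjm := Fin.ext (by simpa [xi] using hiv)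
          subst this
          have : p = xpos hj2 hjm := Fin.ext (by simpa [xpos] using hpv)
          subst this
          rfl
        · simp only [phi, if_pos rfl, if_neg h1, eq_self_iff_true, if_true] at hphi
          omega
      · simp only [phi, if_neg hk] at hphi
        omega
  · cases h

end Scenario

section Conn

variable {σ m K : ℕ}

lemma conn_spine (k : Fin σ) :
    ∀ t : ℕ, (ht : t < m+1) →
      (Gr σ m K).Reachable (Sum.inl (k, Sum.inl ⟨t, ht⟩)) (src k) := by
  intro t
  induction t with
  | zero => intro _; exact SimpleGraph.Reachable.refl _
  | succ t ih =>
    intro ht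
    have h1 : (Gr σ m K).Adj (Sum.inl (k, Sum.inl ⟨t+1, ht⟩))
        (Sum.inl (k, Sum.inl ⟨t, by omega⟩)) :=
      Or.inr (Rel.spine k _ _ (by simp))
    exact h1.reachable.trans (ih (by omega))

lemma conn_tail (k : Fin σ) (i : Fin m) :
    ∀ p : ℕ, (hp : p < 2*m-1) →
      (Gr σ m K).Reachable (Sum.inl (k, Sum.inr (i, ⟨p, hp⟩))) (src k) := by
  intro p
  induction p with
  | zero =>
    intro hp
    have hi := i.isLt
    have h1 : (Gr σ m K).Adj (Sum.inl (k, Sum.inr (i, ⟨0, hp⟩)))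
        (Sum.inl (k, Sum.inl ⟨i.val+1, by omega⟩)) :=
      Or.inr (Rel.attach k _ _ _ (by simp) (by simp))
    exact h1.reachable.trans (conn_spine k _ _)
  | succ p ih =>
    intro hp
    have h1 : (Gr σ m K).Adj (Sum.inl (k, Sum.inr (i, ⟨p+1, hp⟩)))
        (Sum.inl (k, Sum.inr (i, ⟨p, by omega⟩))) :=
      Or.inr (Rel.tail k i _ _ (by simp))
    exact h1.reachable.trans (ih (by omega))

lemma src_z (k : Fin σ) (hm : 1 ≤ m) (r : Fin K) :
    (Gr σ m K).Reachable (src k) (Sum.inr r) := by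
  have hx : (Gr σ m K).Adj (Sum.inl (k, Sum.inr (⟨0, hm⟩, ⟨2*(m-1), by omega⟩)))
      (Sum.inr r : Vt σ m K) :=
    Or.inl (Rel.cross k _ _ r (by simp))
  exact ((conn_tail k ⟨0, hm⟩ (2*(m-1)) (by omega)).symm).trans hx.reachable

lemma gr_conn (hσ : 1 ≤ σ) (hm : 1 ≤ m) (hK : 1 ≤ K) : (Gr σ m K).Connected := by
  rw [SimpleGraph.connected_iff_exists_forall_reachable]
  refine ⟨Sum.inr ⟨0, hK⟩, ?_⟩
  rintro (⟨k, t | ⟨i, p⟩⟩ | r)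
  · exact ((conn_spine k t.val t.isLt).trans (src_z k hm ⟨0, hK⟩)).symm
  · exact ((conn_tail k i p.val p.isLt).trans (src_z k hm ⟨0, hK⟩)).symm
  · exact (((src_z ⟨0, hσ⟩ hm r).symm).trans (src_z ⟨0, hσ⟩ hm ⟨0, hK⟩)).symm

end Conn

section Forcing

variable {σ m K : ℕ}

lemma forced (k : Fin σ) {j : ℕ} (hj2 : 2 ≤ j) (hjm : j ≤ m) (r : Fin K)
    (H' : SimpleGraph (Vt σ m K)) (hle : H' ≤ Gr σ m K)
    (hreach : (H'.deleteEdges {fedge k j hjm}).Reachable (src k) (Sum.inr r))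
    (hdist : (H'.deleteEdges {fedge k j hjm}).dist (src k) (Sum.inr r) = 2*m - j + 3) :
    H'.Adj (xvert k hj2 hjm) (Sum.inr r) := by
  obtain ⟨w, hw⟩ := hreach.exists_walk_length_eq_dist
  rw [hdist] at hw
  obtain ⟨y, p, hadj, hlen⟩ := walk_last_edge w (by omega)
  have hle2 : H'.deleteEdges {fedge k j hjm} ≤ (Gr σ m K).deleteEdges {fedge k j hjm} := by
    intro a b hab
    rw [SimpleGraph.deleteEdges_adj] at hab ⊢
    exact ⟨hle hab.1, hab.2⟩
  have hadjH : H'.Adj y (Sum.inr r) := ((SimpleGraph.deleteEdges_adj).mp hadj).1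
  have hadjG : (Gr σ m K).Adj y (Sum.inr r) := hle hadjH
  have hy : y = xvert k hj2 hjm := by
    refine z_pred k hj2 hjm r y hadjG (p.mapLe hle2) ?_
    have : (p.mapLe hle2).length = p.length := SimpleGraph.Walk.length_map _ _
    omega
  rw [hy] at hadjH
  exact hadjH

end Forcing


lemma final_arith (σ n : ℕ) (hσ : 1 ≤ σ) (hn : 10000*σ ≤ n) :
    (1/100 : ℝ) * Real.sqrt σ * (n:ℝ) ^ ((3:ℝ)/2) ≤
      (σ : ℝ) * (((Nat.sqrt (n / (8*σ)) - 1 : ℕ)) : ℝ) *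
        ((n - σ*((Nat.sqrt (n / (8*σ))+1) + Nat.sqrt (n / (8*σ))*(2*Nat.sqrt (n / (8*σ))-1)) : ℕ) : ℝ) := by
  set q := n / (8*σ) with hq
  set m := Nat.sqrt q with hmdef
  have h8σ : 0 < 8*σ := by omega
  have hqn : 8*σ*q ≤ n := by
    rw [hq, mul_comm (8*σ) _]
    exact Nat.div_mul_le_self n (8*σ)
  have hnq : n < (q+1)*(8*σ) := (Nat.div_lt_iff_lt_mul h8σ).mp (Nat.lt_succ_self q)
  have hmq : m*m ≤ q := Nat.sqrt_le q
  have hqm : q < (m+1)*(m+1) := Nat.lt_succ_sqrt q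
  have hq1250 : 1250 ≤ q := by
    rw [hq, Nat.le_div_iff_mul_le h8σ]
    calc 1250 * (8*σ) = 10000*σ := by ring
    _ ≤ n := hn
  have hm35 : 35 ≤ m := by
    rw [hmdef, Nat.le_sqrt]
    omega
  have hB : σ*(m+1) ≤ σ*(m*m) := Nat.mul_le_mul_left σ (by nlinarith)
  have hC : σ*(m*(2*m-1)) ≤ 2*(σ*(m*m)) := by
    have h1 : 2*m-1 ≤ 2*m := by omega
    calc σ*(m*(2*m-1)) ≤ σ*(m*(2*m)) :=
          Nat.mul_le_mul_left σ (Nat.mul_le_mul_left m h1)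
    _ = 2*(σ*(m*m)) := by ring
  have hG : σ*((m+1) + m*(2*m-1)) = σ*(m+1) + σ*(m*(2*m-1)) := by ring
  have h8A : 8*(σ*(m*m)) ≤ n := by
    have h1 : σ*(m*m) ≤ σ*q := Nat.mul_le_mul_left σ hmq
    calc 8*(σ*(m*m)) ≤ 8*(σ*q) := by omega
    _ = 8*σ*q := by ring
    _ ≤ n := hqn
  have hKn : n ≤ 2*(n - σ*((m+1) + m*(2*m-1))) := by omega
  -- real versions
  have hNpos : (0:ℝ) < (n:ℝ) := by
    have h1 : 0 < n := by omega
    exact_mod_cast h1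
  have hSpos : (0:ℝ) < (σ:ℝ) := by exact_mod_cast hσ
  have hKcast : (n:ℝ)/2 ≤ (((n - σ*((m+1) + m*(2*m-1)) : ℕ)) : ℝ) := by
    have h2 : (n:ℝ) ≤ ((2*(n - σ*((m+1) + m*(2*m-1))) : ℕ) : ℝ) := by exact_mod_cast hKn
    push_cast at h2
    linarith
  have hmcast : (((m - 1 : ℕ)) : ℝ) = (m:ℝ) - 1 := by
    have h1 : 1 ≤ m := by omega
    push_cast [h1]
    ring
  have hsqrtq : Real.sqrt ((n:ℝ)/(8*(σ:ℝ))) ≤ (m:ℝ) + 1 := by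
    have h2 : (n:ℝ) < ((q:ℝ)+1)*(8*(σ:ℝ)) := by exact_mod_cast hnq
    have h3 : ((q:ℝ)+1) ≤ ((m:ℝ)+1)^2 := by
      have h4 : ((q:ℝ)) + 1 ≤ (((m+1)*(m+1) : ℕ) : ℝ) := by exact_mod_cast hqm
      push_cast at h4
      nlinarith
    have h1 : (n:ℝ)/(8*(σ:ℝ)) ≤ ((m:ℝ)+1)^2 := by
      rw [div_le_iff₀ (by positivity)]
      nlinarith
    calc Real.sqrt ((n:ℝ)/(8*(σ:ℝ))) ≤ Real.sqrt (((m:ℝ)+1)^2) := Real.sqrt_le_sqrt h1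
    _ = (m:ℝ)+1 := Real.sqrt_sq (by positivity)
  have hsqrt35 : (35:ℝ) ≤ Real.sqrt ((n:ℝ)/(8*(σ:ℝ))) := by
    rw [Real.le_sqrt (by norm_num) (by positivity), le_div_iff₀ (by positivity)]
    have h1 : ((10000*σ : ℕ) : ℝ) ≤ (n:ℝ) := by exact_mod_cast hn
    push_cast at h1
    nlinarith
  have hm1 : (33/35) * Real.sqrt ((n:ℝ)/(8*(σ:ℝ))) ≤ (m:ℝ) - 1 := by linarith
  have hsq : Real.sqrt ((n:ℝ)/(8*(σ:ℝ))) = Real.sqrt (n:ℝ) / Real.sqrt (8*(σ:ℝ)) :=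
    Real.sqrt_div (le_of_lt hNpos) _
  have hsqS : (0:ℝ) < Real.sqrt (σ:ℝ) := Real.sqrt_pos.mpr hSpos
  have hs8 : Real.sqrt (8*(σ:ℝ)) ≤ 3 * Real.sqrt (σ:ℝ) := by
    rw [Real.sqrt_mul (by norm_num : (0:ℝ) ≤ 8)]
    have h1 : Real.sqrt 8 ≤ 3 := by
      nlinarith [Real.sq_sqrt (by norm_num : (0:ℝ) ≤ 8), Real.sqrt_nonneg (8:ℝ)]
    nlinarith [Real.sqrt_nonneg (σ:ℝ), Real.sqrt_nonneg (8:ℝ)]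
  have hsqrtlb : Real.sqrt (n:ℝ) / (3 * Real.sqrt (σ:ℝ)) ≤ Real.sqrt ((n:ℝ)/(8*(σ:ℝ))) := by
    rw [hsq]
    apply div_le_div_of_nonneg_left (Real.sqrt_nonneg (n:ℝ)) _ hs8
    positivity
  have hrpow : (n:ℝ) ^ ((3:ℝ)/2) = (n:ℝ) * Real.sqrt (n:ℝ) := by
    rw [show (3:ℝ)/2 = 1 + 1/2 by norm_num, Real.rpow_add hNpos, Real.rpow_one,
      Real.sqrt_eq_rpow]
  rw [hrpow, hmcast]
  have hm1' : Real.sqrt (n:ℝ) / (3 * Real.sqrt (σ:ℝ)) * (33/35) ≤ (m:ℝ) - 1 := by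
    nlinarith [hsqrtlb, hm1]
  have hm1nn : (0:ℝ) ≤ (m:ℝ) - 1 := by
    have h1 : (35:ℝ) ≤ (m:ℝ) := by exact_mod_cast hm35
    linarith
  -- final chain
  have hKnn : (0:ℝ) ≤ ((n - σ*((m+1) + m*(2*m-1)) : ℕ) : ℝ) := Nat.cast_nonneg _
  have step1 : (σ:ℝ) * ((Real.sqrt (n:ℝ) / (3 * Real.sqrt (σ:ℝ)) * (33/35))) * ((n:ℝ)/2) ≤
      (σ:ℝ) * ((m:ℝ) - 1) * ((n - σ*((m+1) + m*(2*m-1)) : ℕ) : ℝ) := by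
    apply mul_le_mul
    · apply mul_le_mul_of_nonneg_left hm1' (le_of_lt hSpos)
    · exact hKcast
    · positivity
    · positivity
  refine le_trans ?_ step1
  have heq : (σ:ℝ) * ((Real.sqrt (n:ℝ) / (3 * Real.sqrt (σ:ℝ)) * (33/35))) * ((n:ℝ)/2)
      = (11/70) * ((σ:ℝ) / Real.sqrt (σ:ℝ)) * Real.sqrt (n:ℝ) * (n:ℝ) := by
    have hSS : Real.sqrt (σ:ℝ) ^ 2 = (σ:ℝ) := Real.sq_sqrt (le_of_lt hSpos)
    field_simp
    ring_nf
  rw [heq, Real.div_sqrt]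
  nlinarith [mul_nonneg (mul_nonneg (le_of_lt hsqS) (Real.sqrt_nonneg (n:ℝ))) (le_of_lt hNpos)]


end FTaux

/-- `H` is an edge FT-MBFS structure for `G` with respect to source set `S`:
`H` is a spanning subgraph of `G` and, for every `s ∈ S`, every edge `e` of `G`
and every vertex `v`, `s` and `v` are connected in `H ∖ e` iff they are connected
in `G ∖ e`, and in that case the distances agree. -/
def IsFTMBFS {V : Type*} (G H : SimpleGraph V) (S : Set V) : Prop :=
  H ≤ G ∧ ∀ s ∈ S, ∀ e ∈ G.edgeSet, ∀ v : V,
    ((H.deleteEdges {e}).Reachable s v ↔ (G.deleteEdges {e}).Reachable s v) ∧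
    ((G.deleteEdges {e}).Reachable s v →
      (H.deleteEdges {e}).dist s v = (G.deleteEdges {e}).dist s v)

/-- There exists `c > 0` such that for every `σ ≥ 1` there is `n₀` such that for all
`n ≥ n₀` there exist a connected graph `G` on `n` vertices and a set `S` of `σ`
sources so that every edge FT-MBFS structure for `G` w.r.t. `S` has at least
`c · √σ · n^{3/2}` edges. -/
theorem ftmbfs_lower_bound :
    ∃ c : ℝ, 0 < c ∧ ∀ σ : ℕ, 1 ≤ σ → ∃ n₀ : ℕ, ∀ n : ℕ, n₀ ≤ n →
      ∃ (G : SimpleGraph (Fin n)) (S : Finset (Fin n)), G.Connected ∧ S.card = σ ∧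
        ∀ H : SimpleGraph (Fin n), IsFTMBFS G H (S : Set (Fin n)) →
          c * Real.sqrt (σ : ℝ) * (n : ℝ) ^ ((3 : ℝ) / 2) ≤ (H.edgeSet.ncard : ℝ) := by
  classical
  refine ⟨1/100, by norm_num, ?_⟩
  intro σ hσ
  refine ⟨10000*σ, ?_⟩
  intro n hn
  set q := n / (8*σ) with hqdef
  set m := Nat.sqrt q with hmdef
  set K := n - σ*((m+1) + m*(2*m-1)) with hKdef
  -- nat facts
  have h8σ : 0 < 8*σ := by omega
  have hqn : 8*σ*q ≤ n := by
    rw [hqdef, mul_comm (8*σ) _]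
    exact Nat.div_mul_le_self n (8*σ)
  have hmq : m*m ≤ q := Nat.sqrt_le q
  have hq1250 : 1250 ≤ q := by
    rw [hqdef, Nat.le_div_iff_mul_le h8σ]
    calc 1250 * (8*σ) = 10000*σ := by ring
    _ ≤ n := hn
  have hm35 : 35 ≤ m := by
    rw [hmdef, Nat.le_sqrt]
    omega
  have hB : σ*(m+1) ≤ σ*(m*m) := Nat.mul_le_mul_left σ (by nlinarith)
  have hC : σ*(m*(2*m-1)) ≤ 2*(σ*(m*m)) := by
    have h1 : 2*m-1 ≤ 2*m := by omega
    calc σ*(m*(2*m-1)) ≤ σ*(m*(2*m)) :=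
          Nat.mul_le_mul_left σ (Nat.mul_le_mul_left m h1)
    _ = 2*(σ*(m*m)) := by ring
  have hG : σ*((m+1) + m*(2*m-1)) = σ*(m+1) + σ*(m*(2*m-1)) := by ring
  have h8A : 8*(σ*(m*m)) ≤ n := by
    have h1 : σ*(m*m) ≤ σ*q := Nat.mul_le_mul_left σ hmq
    calc 8*(σ*(m*m)) ≤ 8*(σ*q) := by omega
    _ = 8*σ*q := by ring
    _ ≤ n := hqn
  have hsub : σ*((m+1) + m*(2*m-1)) ≤ n := by omega
  have hKpos : 1 ≤ K := by omega
  -- the equivalence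
  have hcard : Fintype.card (FTaux.Vt σ m K) = n := by
    simp only [FTaux.Vt, Fintype.card_sum, Fintype.card_prod, Fintype.card_fin]
    omega
  set ε : FTaux.Vt σ m K ≃ Fin n := Fintype.equivFinOfCardEq hcard with hεdef
  refine ⟨(FTaux.Gr σ m K).comap ⇑ε.symm,
    Finset.image (fun k => ε (FTaux.src k)) Finset.univ, ?_, ?_, ?_⟩
  · exact FTaux.comap_equiv_connected ε.symm
      (FTaux.gr_conn (by omega) (by omega) hKpos)
  · rw [Finset.card_image_of_injective _ ?_, Finset.card_univ, Fintype.card_fin]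
    intro a b h
    have h2 := ε.injective h
    simpa [FTaux.src] using h2
  · intro H hH
    obtain ⟨hle, hprop⟩ := hH
    set H' : SimpleGraph (FTaux.Vt σ m K) := H.comap ⇑ε with hH'def
    have hle' : H' ≤ FTaux.Gr σ m K := by
      intro a b hab
      have h2 := hle hab
      simpa using h2
    have hforce : ∀ (k : Fin σ) (c : Fin (m-1)) (r : Fin K),
        H.Adj (ε (FTaux.xvert k (show 2 ≤ c.val+2 by omega)
          (show c.val+2 ≤ m by have := c.2; omega))) (ε (Sum.inr r)) := by
      intro k c r
      have hj2 : 2 ≤ c.val + 2 := by omega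
      have hjm : c.val + 2 ≤ m := by have := c.2; omega
      set e' := FTaux.fedge (σ := σ) (K := K) k (c.val+2) hjm with he'def
      have he'mem : e' ∈ (FTaux.Gr σ m K).edgeSet := FTaux.fedge_mem k hj2 hjm
      set eF := Sym2.map ⇑ε e' with heFdef
      have heF : eF ∈ ((FTaux.Gr σ m K).comap ⇑ε.symm).edgeSet := by
        rw [heFdef, he'def, FTaux.fedge, Sym2.map_pair_eq, SimpleGraph.mem_edgeSet]
        simp only [SimpleGraph.comap_adj, Equiv.symm_apply_apply]
        rw [he'def, FTaux.fedge, SimpleGraph.mem_edgeSet] at he'mem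
        exact he'mem
      have hsmem : ε (FTaux.src k) ∈
          ↑(Finset.image (fun k => ε (FTaux.src k)) Finset.univ) := by
        exact Finset.mem_coe.mpr (Finset.mem_image_of_mem _ (Finset.mem_univ k))
      obtain ⟨hiff, hdeq⟩ := hprop (ε (FTaux.src k)) hsmem eF heF (ε (Sum.inr r))
      have hid1 : ((FTaux.Gr σ m K).comap ⇑ε.symm).deleteEdges {eF} =
          ((FTaux.Gr σ m K).deleteEdges {e'}).comap ⇑ε.symm := by
        have h1 := FTaux.comap_equiv_deleteEdges ε.symm (FTaux.Gr σ m K) e'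
        simp only [Equiv.symm_symm] at h1
        rw [heFdef]
        exact h1
      have hid2 : H.deleteEdges {eF} = (H'.deleteEdges {e'}).comap ⇑ε.symm := by
        have h0 : H = H'.comap ⇑ε.symm := by
          ext a b
          simp [hH'def]
        have h1 := FTaux.comap_equiv_deleteEdges ε.symm H' e'
        simp only [Equiv.symm_symm] at h1
        rw [← h0] at h1
        rw [heFdef]
        exact h1
      -- distances in the master graph
      have hdz := FTaux.dist_z k hj2 hjm r
      have hreachF : (((FTaux.Gr σ m K).comap ⇑ε.symm).deleteEdges {eF}).Reachable
          (ε (FTaux.src k)) (ε (Sum.inr r)) := by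
        rw [hid1, FTaux.comap_equiv_reachable]
        simpa using hdz.2
      have hreachH : ((H.deleteEdges {eF})).Reachable (ε (FTaux.src k)) (ε (Sum.inr r)) :=
        hiff.mpr hreachF
      have hreachH' : (H'.deleteEdges {e'}).Reachable (FTaux.src k) (Sum.inr r) := by
        rw [hid2, FTaux.comap_equiv_reachable] at hreachH
        simpa using hreachH
      have hdistH : (H'.deleteEdges {e'}).dist (FTaux.src k) (Sum.inr r)
          = 2*m - (c.val+2) + 3 := by
        have h1 := hdeq hreachF
        rw [hid1, hid2, FTaux.comap_equiv_dist, FTaux.comap_equiv_dist] at h1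
        simp only [Equiv.symm_apply_apply] at h1
        rw [h1]
        exact hdz.1
      exact FTaux.forced k hj2 hjm r H' hle' hreachH' hdistH
    -- counting the forced edges
    set f : Fin σ × Fin (m-1) × Fin K → Sym2 (Fin n) := fun t =>
      s(ε (FTaux.xvert t.1 (show 2 ≤ t.2.1.val+2 by omega)
        (show t.2.1.val+2 ≤ m by have := t.2.1.2; omega)), ε (Sum.inr t.2.2)) with hfdef
    have hinj : Function.Injective f := by
      rintro ⟨k1, c1, r1⟩ ⟨k2, c2, r2⟩ h
      simp only [hfdef, Sym2.eq_iff] at h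
      rcases h with ⟨h1, h2⟩ | ⟨h1, h2⟩
      · have e1 := ε.injective h1
        have e2 := ε.injective h2
        simp only [FTaux.xvert, FTaux.xi, FTaux.xpos, Sum.inl.injEq, Sum.inr.injEq,
          Prod.mk.injEq, Fin.mk.injEq] at e1 e2
        obtain ⟨ek, ei, _⟩ := e1
        refine Prod.ext ek (Prod.ext (Fin.ext ?_) e2)
        show (c1 : ℕ) = (c2 : ℕ)
        omega
      · have e1 := ε.injective h1
        simp only [FTaux.xvert] at e1
        exact absurd e1 (by simp)
    have hsubE : ↑(Finset.univ.image f) ⊆ H.edgeSet := by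
      intro e he
      simp only [Finset.coe_image, Set.mem_image, Finset.mem_coe, Finset.mem_univ] at he
      obtain ⟨t, _, rfl⟩ := he
      rw [SimpleGraph.mem_edgeSet]
      exact hforce t.1 t.2.1 t.2.2
    have hcount : σ * ((m-1) * K) ≤ H.edgeSet.ncard := by
      have h1 : (Finset.univ.image f).card = σ * ((m-1) * K) := by
        rw [Finset.card_image_of_injective _ hinj, Finset.card_univ]
        simp
      calc σ * ((m-1) * K) = (Finset.univ.image f).card := h1.symm
      _ = (↑(Finset.univ.image f) : Set (Sym2 (Fin n))).ncard :=
          (Set.ncard_coe_finset _).symm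
      _ ≤ H.edgeSet.ncard := Set.ncard_le_ncard hsubE (Set.toFinite _)
    -- final arithmetic
    have harith := FTaux.final_arith σ n hσ hn
    rw [← hqdef, ← hmdef, ← hKdef] at harith
    refine le_trans harith ?_
    have hcast : ((σ * ((m-1) * K) : ℕ) : ℝ) ≤ (H.edgeSet.ncard : ℝ) := by
      exact_mod_cast hcount
    rw [Nat.cast_mul, Nat.cast_mul] at hcast
    linarith
end

section
/- For every finite connected simple graph G on n vertices and every vertex s of G, there exists a spanning subgraph H of G that is an edge FT-BFS structure for G with respect to s and satisfies |E(H)| ≤ n + n · min(Depth(s), ⌈√(2n)⌉), where Depth(s) = max_{v} dist(s,v,G) is the eccentricity of s in G. -/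
open SimpleGraph

namespace FTBFS

variable {V : Type*}

lemma dist_mono {A B : SimpleGraph V} (h : A ≤ B) {x y : V} (hr : A.Reachable x y) :
    B.dist x y ≤ A.dist x y := by
  obtain ⟨p, hp⟩ := hr.exists_walk_length_eq_dist
  calc B.dist x y ≤ (p.mapLe h).length := SimpleGraph.dist_le _
    _ = p.length := by simp [Walk.mapLe]
    _ = A.dist x y := hp

lemma del_mono {A B : SimpleGraph V} (h : A ≤ B) (s : Set (Sym2 V)) :
    A.deleteEdges s ≤ B.deleteEdges s := by
  intro a b hab
  simp only [deleteEdges_adj] at *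
  exact ⟨h hab.1, hab.2⟩

lemma dist_le_add_one {B : SimpleGraph V} {s u v : V} (hr : B.Reachable s u) (ha : B.Adj u v) :
    B.dist s v ≤ B.dist s u + 1 := by
  obtain ⟨p, hp⟩ := hr.exists_walk_length_eq_dist
  calc B.dist s v ≤ (p.concat ha).length := SimpleGraph.dist_le _
    _ = B.dist s u + 1 := by rw [Walk.length_concat, hp]

lemma exists_pred {B : SimpleGraph V} {s v : V} (hr : B.Reachable s v) (hv : v ≠ s) :
    ∃ u, B.Adj u v ∧ B.dist s u + 1 = B.dist s v := by
  obtain ⟨p, hp⟩ := (hr.symm).exists_walk_length_eq_dist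
  obtain ⟨u, q, ha, rfl⟩ : ∃ (u : V) (q : B.Walk u s) (ha : B.Adj v u), p = Walk.cons ha q := by
    obtain ⟨u, ha, q, rfl⟩ := Walk.exists_eq_cons_of_ne hv p
    exact ⟨u, q, ha, rfl⟩
  refine ⟨u, ha.symm, ?_⟩
  have h1 : B.dist s u ≤ q.length := by
    calc B.dist s u ≤ q.reverse.length := SimpleGraph.dist_le _
      _ = q.length := Walk.length_reverse _
  have h2 : B.dist s v ≤ B.dist s u + 1 := dist_le_add_one ⟨q.reverse⟩ ha.symm
  have h3 : q.length + 1 = B.dist v s := by simpa using hp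
  rw [SimpleGraph.dist_comm] at h3
  omega

noncomputable def smin [Fintype V] [LinearOrder V] (C : Set V) (dflt : V) : V :=
  @dite _ _ (Classical.propDecidable _) (fun h => (C.toFinite.toFinset).min' (by simpa using h)) (fun _ => dflt)

lemma smin_mem [Fintype V] [LinearOrder V] {C : Set V} (d : V) (h : C.Nonempty) :
    smin C d ∈ C := by
  rw [smin, dif_pos h]
  have := Finset.min'_mem (C.toFinite.toFinset) (by simpa using h)
  simpa using this

lemma smin_le [Fintype V] [LinearOrder V] {C : Set V} (d : V) {x : V} (hx : x ∈ C) :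
    smin C d ≤ x := by
  rw [smin, dif_pos ⟨x, hx⟩]
  exact Finset.min'_le _ _ (by simpa using hx)

lemma nat_distinct_sum (S : Finset ℕ) : S.card * (S.card - 1) ≤ 2 * ∑ y ∈ S, y := by
  induction S using Finset.strongInduction with
  | _ S ih =>
    rcases S.eq_empty_or_nonempty with rfl | hS
    · simp
    have hM : S.max' hS ∈ S := S.max'_mem hS
    have h1 : S.card ≤ S.max' hS + 1 := by
      calc S.card ≤ (Finset.range (S.max' hS + 1)).card :=
            Finset.card_le_card (fun x hx => Finset.mem_range.mpr
              (Nat.lt_succ_of_le (S.le_max' x hx)))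
        _ = S.max' hS + 1 := Finset.card_range _
    have h2 := ih (S.erase (S.max' hS)) (Finset.erase_ssubset hM)
    have h3 : (S.erase (S.max' hS)).card = S.card - 1 := Finset.card_erase_of_mem hM
    have h4 : S.max' hS + ∑ y ∈ S.erase (S.max' hS), y = ∑ y ∈ S, y :=
      Finset.add_sum_erase S id hM
    rw [h3] at h2
    rcases Nat.eq_zero_or_pos S.card with h0 | h0
    · simp [h0]
    have h5 : S.card * (S.card - 1) = (S.card - 1) * (S.card - 1 - 1) + 2 * (S.card - 1) := by
      obtain ⟨c, hc⟩ : ∃ c, S.card = c + 1 := ⟨S.card - 1, by omega⟩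
      rw [hc, Nat.add_sub_cancel]
      rcases c with _ | k
      · simp
      · rw [Nat.add_sub_cancel]; ring
    have h6 : S.card - 1 ≤ S.max' hS := by omega
    calc S.card * (S.card - 1)
        = (S.card - 1) * (S.card - 1 - 1) + 2 * (S.card - 1) := h5
      _ ≤ 2 * ∑ y ∈ S.erase (S.max' hS), y + 2 * (S.card - 1) := Nat.add_le_add_right h2 _
      _ ≤ 2 * ∑ y ∈ S.erase (S.max' hS), y + 2 * S.max' hS := by linarith
      _ = 2 * ∑ y ∈ S, y := by linarith

lemma sum_sq {α : Type*} (Q : Finset α) (f : α → ℕ) (hf : Set.InjOn f Q) :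
    Q.card * (Q.card - 1) ≤ 2 * ∑ x ∈ Q, f x := by
  classical
  have hcard : (Q.image f).card = Q.card := Finset.card_image_of_injOn hf
  have hsum : ∑ y ∈ Q.image f, (y : ℕ) = ∑ x ∈ Q, f x :=
    Finset.sum_image (fun x hx y hy h => hf hx hy h)
  rw [← hsum, ← hcard]
  exact nat_distinct_sum _

lemma K_bound {n c : ℕ} (hn : 1 ≤ n) (h : c * (c - 1) ≤ 2 * n) :
    c ≤ ⌈Real.sqrt (2 * (n : ℝ))⌉₊ := by
  by_contra hc
  push_neg at hc
  set K := ⌈Real.sqrt (2 * (n : ℝ))⌉₊ with hK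
  have hK2 : 2 * n ≤ K ^ 2 := by
    have h1 : Real.sqrt (2 * (n : ℝ)) ≤ (K : ℝ) := Nat.le_ceil _
    have h2 : ((2 * n : ℕ) : ℝ) ≤ (K : ℝ) ^ 2 := by
      push_cast
      nlinarith [Real.sq_sqrt (by positivity : (0:ℝ) ≤ 2 * (n:ℝ)), Real.sqrt_nonneg (2 * (n:ℝ))]
    exact_mod_cast h2
  have hKpos : 0 < K := by
    rw [hK]
    exact Nat.ceil_pos.mpr (Real.sqrt_pos.mpr (by positivity))
  have hc' : (K + 1) * K ≤ c * (c - 1) := Nat.mul_le_mul (by omega) (by omega)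
  have : (K + 1) * K ≤ K * K := by
    calc (K+1) * K ≤ c * (c-1) := hc'
      _ ≤ 2 * n := h
      _ ≤ K ^ 2 := hK2
      _ = K * K := sq K
  have := Nat.le_of_mul_le_mul_right this hKpos
  omega


section Main

variable (G : SimpleGraph V) (s : V)

/-- BFS tree parent. -/
noncomputable def tpar (v : V) : V :=
  @dite _ _ (Classical.propDecidable _)
    (fun (h : ∃ u, G.Adj u v ∧ G.dist s u + 1 = G.dist s v) => h.choose) (fun _ => v)

lemma tpar_spec (hG : G.Connected) {v : V} (hv : v ≠ s) :
    G.Adj (tpar G s v) v ∧ G.dist s (tpar G s v) + 1 = G.dist s v := by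
  have h := exists_pred (hG.preconnected s v) hv
  rw [show tpar G s v = _ from dif_pos h]
  exact h.choose_spec

/-- Iterated tree parent. -/
noncomputable def pchain (m : ℕ) (v : V) : V := (tpar G s)^[m] v

lemma pchain_zero (v : V) : pchain G s 0 v = v := rfl

lemma pchain_succ (m : ℕ) (v : V) :
    pchain G s (m + 1) v = tpar G s (pchain G s m v) := Function.iterate_succ_apply' _ _ _

lemma pchain_add (m r : ℕ) (v : V) :
    pchain G s (m + r) v = pchain G s m (pchain G s r v) := Function.iterate_add_apply _ _ _ _

variable {G s}

lemma ne_s_of_dist_pos {v : V} (h : 0 < G.dist s v) : v ≠ s := by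
  rintro rfl
  simp [SimpleGraph.dist_self] at h

lemma pchain_dist (hG : G.Connected) :
    ∀ m {v : V}, m ≤ G.dist s v → G.dist s (pchain G s m v) + m = G.dist s v := by
  intro m
  induction m with
  | zero => intro v _; simp [pchain_zero]
  | succ m ih =>
    intro v h
    have hm : m ≤ G.dist s v := by omega
    have hd := ih hm
    have hx : pchain G s m v ≠ s := by
      have h0 : 0 < G.dist s (pchain G s m v) := by omega
      exact ne_s_of_dist_pos h0
    have hspec := tpar_spec G s hG hx
    rw [pchain_succ]
    omega

lemma pchain_adj (hG : G.Connected) {m : ℕ} {v : V} (hm : m < G.dist s v) :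
    G.Adj (pchain G s (m+1) v) (pchain G s m v) := by
  have hd := pchain_dist hG m (v := v) hm.le
  have hx : pchain G s m v ≠ s := by
    have h0 : 0 < G.dist s (pchain G s m v) := by omega
    exact ne_s_of_dist_pos h0
  rw [pchain_succ]
  exact (tpar_spec G s hG hx).1

lemma pchain_last (hG : G.Connected) (v : V) : pchain G s (G.dist s v) v = s := by
  have h := pchain_dist hG (G.dist s v) (v := v) le_rfl
  have h0 : G.dist s (pchain G s (G.dist s v) v) = 0 := by omega
  have := (hG.preconnected s (pchain G s (G.dist s v) v)).dist_eq_zero_iff.mp h0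
  exact this.symm

variable (G s) in
/-- Vertices of the tree path from `v` to `s`. -/
def piSet (v : V) : Set V := {u | ∃ m, m ≤ G.dist s v ∧ pchain G s m v = u}

variable (G s) in
/-- `m`-th edge of the tree path of `v` (counted from `v`). -/
noncomputable def piEdge (m : ℕ) (v : V) : Sym2 V := s(pchain G s (m+1) v, pchain G s m v)

variable (G s) in
/-- Edges of the tree path from `v` to `s`. -/
def piE (v : V) : Set (Sym2 V) := {x | ∃ m, m < G.dist s v ∧ x = piEdge G s m v}

lemma pchain_inj (hG : G.Connected) {m m' : ℕ} {v : V} (hm : m ≤ G.dist s v)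
    (hm' : m' ≤ G.dist s v) (h : pchain G s m v = pchain G s m' v) : m = m' := by
  have h1 := pchain_dist hG m (v := v) hm
  have h2 := pchain_dist hG m' (v := v) hm'
  rw [h] at h1
  omega

lemma piEdge_inj (hG : G.Connected) {k k' : ℕ} {v : V} (hk : k < G.dist s v)
    (hk' : k' < G.dist s v) (h : piEdge G s k v = piEdge G s k' v) : k = k' := by
  simp only [piEdge, Sym2.eq_iff] at h
  rcases h with ⟨h1, h2⟩ | ⟨h1, h2⟩
  · exact pchain_inj hG (by omega) (by omega) h2
  · have e1 := pchain_inj hG (v := v) (by omega) (by omega) h1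
    have e2 := pchain_inj hG (v := v) (by omega) (by omega) h2
    omega

lemma piE_endpoint (hG : G.Connected) {v x y : V} (hxy : s(x, y) ∈ piE G s v) :
    x ∈ piSet G s v := by
  obtain ⟨m, hm, he⟩ := hxy
  simp only [piEdge, Sym2.eq_iff] at he
  rcases he with ⟨h1, _⟩ | ⟨h1, _⟩
  · exact ⟨m + 1, by omega, h1.symm⟩
  · exact ⟨m, by omega, h1.symm⟩

lemma piE_shift (hG : G.Connected) {v : V} {r : ℕ} (hr : r ≤ G.dist s v) :
    piE G s (pchain G s r v) ⊆ piE G s v := by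
  rintro x ⟨j, hj, rfl⟩
  have hd := pchain_dist hG r (v := v) hr
  refine ⟨j + r, by omega, ?_⟩
  simp only [piEdge, ← pchain_add]
  have : j + 1 + r = j + r + 1 := by ring
  rw [this]

lemma piEdge_base_shift (hG : G.Connected) {v : V} {r j : ℕ} :
    piEdge G s j (pchain G s r v) = piEdge G s (j + r) v := by
  simp only [piEdge, ← pchain_add]
  have : j + 1 + r = j + r + 1 := by ring
  rw [this]

end Main


section Del

variable [Fintype V] [LinearOrder V] (G : SimpleGraph V) (s : V) (e : Sym2 V)

/-- Candidate parents of `v` in `G` minus `e`. -/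
def Cset (v : V) : Set V :=
  {u | (G.deleteEdges {e}).Adj u v ∧
    (G.deleteEdges {e}).dist s u + 1 = (G.deleteEdges {e}).dist s v}

/-- Canonical parent of `v` in `G` minus `e`, preferring the tree parent. -/
noncomputable def epar (v : V) : V :=
  @ite _ (tpar G s v ∈ Cset G s e v) (Classical.propDecidable _)
    (tpar G s v) (smin (Cset G s e v) v)

variable {G s e}

lemma Cset_nonempty {v : V} (hr : (G.deleteEdges {e}).Reachable s v) (hv : v ≠ s) :
    (Cset G s e v).Nonempty := by
  obtain ⟨u, hu1, hu2⟩ := exists_pred hr hv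
  exact ⟨u, hu1, hu2⟩

lemma epar_mem {v : V} (hr : (G.deleteEdges {e}).Reachable s v) (hv : v ≠ s) :
    epar G s e v ∈ Cset G s e v := by
  by_cases h : tpar G s v ∈ Cset G s e v
  · rw [epar, if_pos h]; exact h
  · rw [epar, if_neg h]; exact smin_mem _ (Cset_nonempty hr hv)

lemma epar_eq_of_mem {v : V} (h : tpar G s v ∈ Cset G s e v) : epar G s e v = tpar G s v :=
  if_pos h

lemma epar_min {v x : V} (hfb : epar G s e v ≠ tpar G s v) (hx : x ∈ Cset G s e v) :
    epar G s e v ≤ x := by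
  by_cases h : tpar G s v ∈ Cset G s e v
  · exact absurd (epar_eq_of_mem h) hfb
  · rw [epar, if_neg h]
    exact smin_le _ hx

variable (G s e) in
/-- Iterated canonical parent in `G` minus `e`. -/
noncomputable def echain (t : ℕ) (v : V) : V := (epar G s e)^[t] v

lemma echain_zero (v : V) : echain G s e 0 v = v := rfl

lemma echain_succ (t : ℕ) (v : V) :
    echain G s e (t + 1) v = epar G s e (echain G s e t v) := Function.iterate_succ_apply' _ _ _

lemma echain_one (v : V) : echain G s e 1 v = epar G s e v := rfl

lemma echain_add (t r : ℕ) (v : V) :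
    echain G s e (t + r) v = echain G s e t (echain G s e r v) :=
  Function.iterate_add_apply _ _ _ _

lemma echain_dist {v : V} (hr : (G.deleteEdges {e}).Reachable s v) :
    ∀ t, t ≤ (G.deleteEdges {e}).dist s v →
      (G.deleteEdges {e}).dist s (echain G s e t v) + t = (G.deleteEdges {e}).dist s v ∧
      (G.deleteEdges {e}).Reachable s (echain G s e t v) := by
  intro t
  induction t with
  | zero => intro _; exact ⟨by simp [echain_zero], hr⟩
  | succ t ih =>
    intro h
    obtain ⟨hd, hre⟩ := ih (by omega)
    have hx : echain G s e t v ≠ s := by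
      have h0 : 0 < (G.deleteEdges {e}).dist s (echain G s e t v) := by omega
      exact ne_s_of_dist_pos h0
    have hsp := epar_mem hre hx
    have hdeq : (G.deleteEdges {e}).dist s (epar G s e (echain G s e t v)) + 1 =
        (G.deleteEdges {e}).dist s (echain G s e t v) := hsp.2
    rw [echain_succ]
    refine ⟨by omega, hre.trans (hsp.1.symm.reachable)⟩

lemma echain_adj {v : V} {t : ℕ} (hr : (G.deleteEdges {e}).Reachable s v)
    (ht : t < (G.deleteEdges {e}).dist s v) :
    (G.deleteEdges {e}).Adj (echain G s e (t+1) v) (echain G s e t v) := by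
  obtain ⟨hd, hre⟩ := echain_dist hr t (by omega)
  have hx : echain G s e t v ≠ s := by
    have h0 : 0 < (G.deleteEdges {e}).dist s (echain G s e t v) := by omega
    exact ne_s_of_dist_pos h0
  rw [echain_succ]
  exact (epar_mem hre hx).1

lemma echain_last {v : V} (hr : (G.deleteEdges {e}).Reachable s v) :
    echain G s e ((G.deleteEdges {e}).dist s v) v = s := by
  obtain ⟨hd, hre⟩ := echain_dist hr _ le_rfl
  have h0 : (G.deleteEdges {e}).dist s (echain G s e ((G.deleteEdges {e}).dist s v) v) = 0 := by
    omega
  exact (hre.dist_eq_zero_iff.mp h0).symm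

lemma echain_walk {v : V} (hr : (G.deleteEdges {e}).Reachable s v) :
    ∀ t, t ≤ (G.deleteEdges {e}).dist s v →
      ∃ w : (G.deleteEdges {e}).Walk (echain G s e t v) v, w.length = t ∧
        ∀ x ∈ w.edges, ∃ i, i < t ∧ x = s(echain G s e (i+1) v, echain G s e i v) := by
  intro t
  induction t with
  | zero => exact fun _ => ⟨Walk.nil, rfl, fun x hx => absurd hx List.not_mem_nil⟩
  | succ t ih =>
    intro h
    obtain ⟨w, hw1, hw2⟩ := ih (by omega)
    refine ⟨Walk.cons (echain_adj hr (by omega)) w, by simp [hw1], ?_⟩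
    intro x hx
    rw [Walk.edges_cons] at hx
    rcases List.mem_cons.mp hx with rfl | hx
    · exact ⟨t, by omega, rfl⟩
    · obtain ⟨i, hi, hxe⟩ := hw2 x hx
      exact ⟨i, by omega, hxe⟩

/-- Tree path segment avoiding `e`, as a walk in `G ∖ e`. -/
lemma tree_walk_avoid (hG : G.Connected) {v : V} :
    ∀ m, m ≤ G.dist s v → (∀ j, j < m → piEdge G s j v ≠ e) →
      ∃ w : (G.deleteEdges {e}).Walk (pchain G s m v) v, w.length = m := by
  intro m
  induction m with
  | zero => exact fun _ _ => ⟨Walk.nil, rfl⟩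
  | succ m ih =>
    intro h hA
    obtain ⟨w, hw⟩ := ih (by omega) (fun j hj => hA j (by omega))
    have hadj : (G.deleteEdges {e}).Adj (pchain G s (m+1) v) (pchain G s m v) := by
      rw [deleteEdges_adj]
      exact ⟨pchain_adj hG (by omega), by
        simpa [piEdge] using hA m (by omega)⟩
    exact ⟨Walk.cons hadj w, by simp [hw]⟩

/-- If `e` is not on the tree path of `v`, then deleting `e` preserves dist and reachability. -/
lemma dist_del_eq (hG : G.Connected) {v : V} (he : e ∉ piE G s v) :
    (G.deleteEdges {e}).dist s v = G.dist s v ∧ (G.deleteEdges {e}).Reachable s v := by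
  have hA : ∀ j, j < G.dist s v → piEdge G s j v ≠ e := by
    intro j hj habs
    exact he ⟨j, hj, habs.symm⟩
  obtain ⟨w, hw⟩ := tree_walk_avoid hG (G.dist s v) le_rfl hA
  let w' := w.copy (pchain_last hG v) rfl
  have hw' : w'.length = G.dist s v := by simpa [w'] using hw
  have hle : (G.deleteEdges {e}).dist s v ≤ G.dist s v := by
    rw [← hw']; exact SimpleGraph.dist_le w'
  have hre : (G.deleteEdges {e}).Reachable s v := ⟨w'⟩
  have hge := dist_mono (deleteEdges_le {e}) hre
  exact ⟨by omega, hre⟩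

/-- No fallback when `e` is off the tree path. -/
lemma epar_eq_tpar_of_not_piE (hG : G.Connected) {v : V} (hv : v ≠ s) (he : e ∉ piE G s v) :
    epar G s e v = tpar G s v := by
  have hdv : 0 < G.dist s v := hG.pos_dist_of_ne (fun h => hv h.symm)
  have h1 := dist_del_eq hG he
  have hsh : e ∉ piE G s (pchain G s 1 v) := fun hx => he (piE_shift hG hdv hx)
  have h2 := dist_del_eq hG hsh
  have hpd := pchain_dist hG 1 (v := v) hdv
  have htp : tpar G s v = pchain G s 1 v := by rw [pchain_succ, pchain_zero]
  apply epar_eq_of_mem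
  constructor
  · rw [deleteEdges_adj]
    refine ⟨(tpar_spec G s hG hv).1, ?_⟩
    have : s(tpar G s v, v) = piEdge G s 0 v := by
      rw [piEdge, htp]; rfl
    rw [this]
    simp only [Set.mem_singleton_iff]
    intro habs
    exact he ⟨0, hdv, habs.symm⟩
  · rw [htp, h2.1, h1.1]
    omega

lemma fb_mem_piE (hG : G.Connected) {v : V} (hv : v ≠ s)
    (hfb : epar G s e v ≠ tpar G s v) : e ∈ piE G s v := by
  by_contra he
  exact hfb (epar_eq_tpar_of_not_piE hG hv he)

variable (G s e) in
/-- First time the canonical replacement chain of `v` hits the tree path of `v`. -/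
noncomputable def hitT (v : V) : ℕ :=
  sInf {t | 0 < t ∧ t ≤ (G.deleteEdges {e}).dist s v ∧ echain G s e t v ∈ piSet G s v}

lemma hitT_spec (hG : G.Connected) {v : V} (hr : (G.deleteEdges {e}).Reachable s v)
    (hv : v ≠ s) :
    0 < hitT G s e v ∧ hitT G s e v ≤ (G.deleteEdges {e}).dist s v ∧
      echain G s e (hitT G s e v) v ∈ piSet G s v := by
  have hne : {t | 0 < t ∧ t ≤ (G.deleteEdges {e}).dist s v ∧
      echain G s e t v ∈ piSet G s v}.Nonempty := by
    refine ⟨(G.deleteEdges {e}).dist s v, ?_, le_rfl, ?_⟩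
    · exact hr.pos_dist_of_ne (fun h => hv h.symm)
    · rw [echain_last hr]
      exact ⟨G.dist s v, le_rfl, pchain_last hG v⟩
  exact Nat.sInf_mem hne

lemma hitT_min (hG : G.Connected) {v : V} (hr : (G.deleteEdges {e}).Reachable s v)
    (hv : v ≠ s) {t : ℕ} (h0 : 0 < t) (ht : t < hitT G s e v) :
    echain G s e t v ∉ piSet G s v := by
  intro hmem
  have hle := (hitT_spec hG hr hv).2.1
  exact Nat.notMem_of_lt_sInf ht ⟨h0, by omega, hmem⟩

variable (G s) in
/-- Index of an edge on the tree path of `v`. -/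
noncomputable def kdx (v : V) (e : Sym2 V) : ℕ :=
  sInf {k | k < G.dist s v ∧ e = piEdge G s k v}

lemma kdx_spec {v : V} (he : e ∈ piE G s v) :
    kdx G s v e < G.dist s v ∧ e = piEdge G s (kdx G s v e) v := by
  obtain ⟨k, hk, hke⟩ := he
  have h : {k | k < G.dist s v ∧ e = piEdge G s k v}.Nonempty := ⟨k, hk, hke⟩
  exact Nat.sInf_mem h

/-- Main structural claim: if the parent of `v` avoiding `e` is not the tree parent,
then the replacement chain stays off the tree path for at least `k+1` steps, where
`k` is the index of `e` on the tree path of `v`. -/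
lemma hitT_ge (hG : G.Connected) {v : V} (hv : v ≠ s)
    (hr : (G.deleteEdges {e}).Reachable s v)
    (hfb : epar G s e v ≠ tpar G s v)
    {k : ℕ} (hk : k < G.dist s v) (hke : e = piEdge G s k v) :
    k + 1 ≤ hitT G s e v := by
  obtain ⟨hT0, hTle, hTpi⟩ := hitT_spec hG hr hv
  obtain ⟨m, hm, ha⟩ := hTpi
  obtain ⟨hed1, hed2⟩ := echain_dist hr (hitT G s e v) hTle
  -- m ≠ 0
  have hm0 : m ≠ 0 := by
    rintro rfl
    rw [pchain_zero] at ha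
    rw [← ha] at hed1
    omega
  -- G.dist from the hit point to v is at most hitT
  obtain ⟨w, hw1, -⟩ := echain_walk hr (hitT G s e v) hTle
  have hGdle : G.dist (echain G s e (hitT G s e v) v) v ≤ hitT G s e v := by
    calc G.dist (echain G s e (hitT G s e v) v) v
        ≤ (w.mapLe (deleteEdges_le {e})).length := SimpleGraph.dist_le _
      _ = w.length := by simp [Walk.mapLe]
      _ = hitT G s e v := hw1
  have hpd := pchain_dist hG m hm
  have htri := hG.dist_triangle (u := s) (v := pchain G s m v) (w := v)
  have hmle : m ≤ hitT G s e v := by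
    rw [← ha] at hGdle
    omega
  by_contra hcon
  push_neg at hcon
  have hTk : hitT G s e v ≤ k := by omega
  -- tree walk from the hit point down to v, avoiding e
  have hA : ∀ j, j < m → piEdge G s j v ≠ e := by
    intro j hj habs
    have := piEdge_inj hG hk (by omega : j < G.dist s v) (habs.trans hke).symm
    omega
  obtain ⟨w2, hw2⟩ := tree_walk_avoid hG m hm hA
  have hra : (G.deleteEdges {e}).Reachable s (pchain G s m v) := by rw [ha]; exact hed2
  have h5 : (G.deleteEdges {e}).dist s v ≤ (G.deleteEdges {e}).dist s (pchain G s m v) + m := by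
    obtain ⟨p, hp⟩ := hra.exists_walk_length_eq_dist
    calc (G.deleteEdges {e}).dist s v ≤ (p.append w2).length := SimpleGraph.dist_le _
      _ = _ := by rw [Walk.length_append, hp, hw2]
  have hda : (G.deleteEdges {e}).dist s (pchain G s m v) + hitT G s e v
      = (G.deleteEdges {e}).dist s v := by rw [ha]; exact hed1
  have hTm : hitT G s e v = m := by omega
  -- now construct the certificate that the tree parent was valid, contradiction
  have hdv : 0 < G.dist s v := hG.pos_dist_of_ne (fun h => hv h.symm)
  have hd1 := pchain_dist hG 1 (v := v) hdv
  have hbase : pchain G s (m - 1) (pchain G s 1 v) = pchain G s m v := by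
    rw [← pchain_add]
    congr 1
    omega
  have hA1 : ∀ j, j < m - 1 → piEdge G s j (pchain G s 1 v) ≠ e := by
    intro j hj habs
    rw [piEdge_base_shift hG] at habs
    have := piEdge_inj hG (v := v) hk (by omega : j + 1 < G.dist s v) (habs.trans hke).symm
    omega
  obtain ⟨w3, hw3⟩ := tree_walk_avoid hG (v := pchain G s 1 v) (m - 1) (by omega) hA1
  let w3' := w3.copy hbase rfl
  have hw3' : w3'.length = m - 1 := by simpa [w3'] using hw3
  have h6 : (G.deleteEdges {e}).dist s (pchain G s 1 v)
      ≤ (G.deleteEdges {e}).dist s (pchain G s m v) + (m - 1) := by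
    obtain ⟨p, hp⟩ := hra.exists_walk_length_eq_dist
    calc (G.deleteEdges {e}).dist s (pchain G s 1 v) ≤ (p.append w3').length :=
          SimpleGraph.dist_le _
      _ = _ := by rw [Walk.length_append, hp, hw3']
  have hrv1 : (G.deleteEdges {e}).Reachable s (pchain G s 1 v) := hra.trans ⟨w3'⟩
  have hadj1 : (G.deleteEdges {e}).Adj (pchain G s 1 v) v := by
    rw [deleteEdges_adj]
    constructor
    · have := pchain_adj hG (m := 0) (v := v) hdv
      rwa [pchain_zero] at this
    · simp only [Set.mem_singleton_iff]
      intro habs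
      have hpe : s(pchain G s 1 v, v) = piEdge G s 0 v := by
        rw [piEdge, pchain_zero]
      rw [hpe] at habs
      have := piEdge_inj hG (v := v) hdv hk (habs.trans hke)
      omega
  have h7 : (G.deleteEdges {e}).dist s v ≤ (G.deleteEdges {e}).dist s (pchain G s 1 v) + 1 :=
    dist_le_add_one hrv1 hadj1
  have htp : tpar G s v = pchain G s 1 v := by rw [pchain_succ, pchain_zero]
  apply hfb
  apply epar_eq_of_mem
  rw [htp]
  exact ⟨hadj1, by omega⟩

/-- Transfer of a chain segment to the graph with a different tree edge `e'` deleted. -/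
lemma seg_walk (hG : G.Connected) {v : V} (hv : v ≠ s)
    (hr : (G.deleteEdges {e}).Reachable s v) {r t : ℕ} (hrt : r ≤ t)
    (ht : t < hitT G s e v) {e' : Sym2 V} (he' : e' ∈ piE G s v) :
    ∃ w : (G.deleteEdges {e'}).Walk (echain G s e t v) (echain G s e r v),
      w.length = t - r := by
  have hTle := (hitT_spec hG hr hv).2.1
  have hrb := (echain_dist hr r (by omega)).2
  have hdb := (echain_dist hr r (by omega)).1
  have hbase : echain G s e (t - r) (echain G s e r v) = echain G s e t v := by
    rw [← echain_add]
    congr 1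
    omega
  obtain ⟨w, hw1, hw2⟩ := echain_walk hrb (t - r) (by omega)
  have hmem : ∀ x ∈ w.edges, x ∈ (G.deleteEdges {e'}).edgeSet := by
    intro x hx
    obtain ⟨i, hi, rfl⟩ := hw2 x hx
    have hsh : ∀ j, echain G s e j (echain G s e r v) = echain G s e (j + r) v := by
      intro j
      rw [← echain_add]
    have hadj := echain_adj (v := echain G s e r v) (t := i) hrb (by omega)
    rw [SimpleGraph.mem_edgeSet, deleteEdges_adj]
    constructor
    · exact ((deleteEdges_adj.mp hadj).1)
    · simp only [Set.mem_singleton_iff]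
      intro habs
      have hoff : echain G s e (i + 1 + r) v ∉ piSet G s v :=
        hitT_min hG hr hv (by omega) (by omega)
      apply hoff
      apply piE_endpoint hG (y := echain G s e (i + r) v)
      rw [← hsh (i+1), ← hsh i, habs]
      exact he'
  refine ⟨((w.transfer (G.deleteEdges {e'}) hmem).copy hbase rfl), ?_⟩
  rw [Walk.length_copy, Walk.length_transfer, hw1]

/-- Exchange argument: the canonical parent for `e` is a candidate parent for `e'`. -/
lemma key_mem (hG : G.Connected) {v : V} (hv : v ≠ s) {e' : Sym2 V}
    (hr : (G.deleteEdges {e}).Reachable s v) (hr' : (G.deleteEdges {e'}).Reachable s v)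
    (hfb : epar G s e v ≠ tpar G s v) (hfb' : epar G s e' v ≠ tpar G s v)
    {t t' : ℕ} (h0 : 0 < t) (hT : t < hitT G s e v) (h0' : 0 < t') (hT' : t' < hitT G s e' v)
    (hx : echain G s e t v = echain G s e' t' v) (htt : t = t') :
    epar G s e v ∈ Cset G s e' v := by
  have he'pi : e' ∈ piE G s v := fb_mem_piE hG hv hfb'
  have hT'le := (hitT_spec hG hr' hv).2.1
  have hdx' := (echain_dist hr' t' (by omega)).1
  have hrx' : (G.deleteEdges {e'}).Reachable s (echain G s e t v) := by
    rw [hx]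
    exact (echain_dist hr' t' (by omega)).2
  obtain ⟨w1, hw1⟩ := seg_walk hG hv hr (r := 1) (t := t) (by omega) hT he'pi
  have hru' : (G.deleteEdges {e'}).Reachable s (echain G s e 1 v) := hrx'.trans ⟨w1⟩
  have hdu' : (G.deleteEdges {e'}).dist s (echain G s e 1 v)
      ≤ (G.deleteEdges {e'}).dist s (echain G s e t v) + (t - 1) := by
    obtain ⟨p, hp⟩ := hrx'.exists_walk_length_eq_dist
    calc (G.deleteEdges {e'}).dist s (echain G s e 1 v) ≤ (p.append w1).length :=
          SimpleGraph.dist_le _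
      _ = _ := by rw [Walk.length_append, hp, hw1]
  have hadj : (G.deleteEdges {e'}).Adj (echain G s e 1 v) v := by
    rw [deleteEdges_adj]
    constructor
    · rw [echain_one]
      exact (deleteEdges_adj.mp (epar_mem hr hv).1).1
    · simp only [Set.mem_singleton_iff]
      intro habs
      have hoff : echain G s e 1 v ∉ piSet G s v :=
        hitT_min hG hr hv (by omega) (by omega)
      exact hoff (piE_endpoint hG (habs ▸ he'pi))
  have h7 : (G.deleteEdges {e'}).dist s v ≤ (G.deleteEdges {e'}).dist s (echain G s e 1 v) + 1 :=
    dist_le_add_one hru' hadj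
  have hdxx : (G.deleteEdges {e'}).dist s (echain G s e t v) + t'
      = (G.deleteEdges {e'}).dist s v := by rw [hx]; exact hdx'
  rw [← echain_one (G := G) (s := s) (e := e)]
  exact ⟨hadj, by omega⟩

/-- Distinct new parents have disjoint detour interiors. -/
lemma interiors_disjoint (hG : G.Connected) {v : V} (hv : v ≠ s) {e' : Sym2 V}
    (hr : (G.deleteEdges {e}).Reachable s v) (hr' : (G.deleteEdges {e'}).Reachable s v)
    (hfb : epar G s e v ≠ tpar G s v) (hfb' : epar G s e' v ≠ tpar G s v)
    (hne : epar G s e v ≠ epar G s e' v) :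
    Disjoint ((fun t => echain G s e t v) '' Set.Ioo 0 (hitT G s e v))
      ((fun t => echain G s e' t v) '' Set.Ioo 0 (hitT G s e' v)) := by
  rw [Set.disjoint_left]
  rintro x ⟨t, ⟨h0, hT⟩, rfl⟩ ⟨t', ⟨h0', hT'⟩, hx'⟩
  have hx : echain G s e t v = echain G s e' t' v := hx'.symm
  have he'pi : e' ∈ piE G s v := fb_mem_piE hG hv hfb'
  have hepi : e ∈ piE G s v := fb_mem_piE hG hv hfb
  have hTle := (hitT_spec hG hr hv).2.1
  have hT'le := (hitT_spec hG hr' hv).2.1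
  -- t = t'
  have hdx := (echain_dist hr t (by omega)).1
  have hdx' := (echain_dist hr' t' (by omega)).1
  have hrx' : (G.deleteEdges {e'}).Reachable s (echain G s e t v) := by
    rw [hx]; exact (echain_dist hr' t' (by omega)).2
  have hrx : (G.deleteEdges {e}).Reachable s (echain G s e t v) :=
    (echain_dist hr t (by omega)).2
  have hseg : ∀ {f f' : Sym2 V} {u u' : ℕ}, (G.deleteEdges {f}).Reachable s v →
      epar G s f v ≠ tpar G s v → 0 < u → u < hitT G s f v → f' ∈ piE G s v →
      (G.deleteEdges {f'}).Reachable s (echain G s f u v) →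
      (G.deleteEdges {f'}).dist s v ≤ (G.deleteEdges {f'}).dist s (echain G s f u v) + u := by
    intro f f' u u' hrf hfbf h0f hTf hf'pi hrxf
    obtain ⟨wseg, hwseg⟩ := seg_walk hG hv hrf (r := 0) (t := u) (by omega) hTf hf'pi
    obtain ⟨p, hp⟩ := hrxf.exists_walk_length_eq_dist
    calc (G.deleteEdges {f'}).dist s v ≤ (p.append (wseg.copy rfl (echain_zero v))).length :=
          SimpleGraph.dist_le _
      _ = _ := by rw [Walk.length_append, hp, Walk.length_copy, hwseg]; omega
  have h1 := hseg (f := e) (f' := e') (u := t) (u' := t) hr hfb h0 hT he'pi hrx'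
  have h2 := hseg (f := e') (f' := e) (u := t') (u' := t') hr' hfb' h0' hT' hepi (by rw [← hx]; exact hrx)
  have hdxx : (G.deleteEdges {e'}).dist s (echain G s e t v) + t'
      = (G.deleteEdges {e'}).dist s v := by rw [hx]; exact hdx'
  have hdxx2 : (G.deleteEdges {e}).dist s (echain G s e' t' v) + t
      = (G.deleteEdges {e}).dist s v := by rw [← hx]; exact hdx
  have htt : t = t' := by
    rw [← hx] at h2
    omega
  have hm1 := key_mem hG hv hr hr' hfb hfb' h0 hT h0' hT' hx htt
  have hm2 := key_mem hG hv hr' hr hfb' hfb h0' hT' h0 hT hx.symm htt.symm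
  have hle1 := epar_min hfb' hm1
  have hle2 := epar_min hfb hm2
  exact hne (le_antisymm hle2 hle1)

variable (G s) in
/-- Tree edges. -/
def TEset : Set (Sym2 V) := (fun v => s(tpar G s v, v)) '' {v | v ≠ s}

variable (G s) in
/-- Failure edges that force a non-tree parent at `v`. -/
def fbSet (v : V) : Set (Sym2 V) :=
  {e | (G.deleteEdges {e}).Reachable s v ∧ v ≠ s ∧ epar G s e v ≠ tpar G s v}

variable (G s) in
/-- New (non-tree) parent edges at `v`. -/
def NEv (v : V) : Set (Sym2 V) := (fun e => s(epar G s e v, v)) '' fbSet G s v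

variable (G s) in
def NEset : Set (Sym2 V) := ⋃ v, NEv G s v

variable (G s) in
/-- The fault-tolerant BFS structure. -/
noncomputable def HH : SimpleGraph V := fromEdgeSet (TEset G s ∪ NEset G s)

lemma HH_le (hG : G.Connected) : HH G s ≤ G := by
  have hsub : TEset G s ∪ NEset G s ⊆ G.edgeSet := by
    rintro x (⟨v, hv, rfl⟩ | hx)
    · exact (tpar_spec G s hG hv).1
    · obtain ⟨_, ⟨v, rfl⟩, ⟨e, ⟨hre, hv, hfb⟩, rfl⟩⟩ := hx
      exact (deleteEdges_adj.mp (epar_mem hre hv).1).1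
  calc HH G s ≤ fromEdgeSet G.edgeSet := fromEdgeSet_mono hsub
    _ = G := fromEdgeSet_edgeSet G

lemma correct (hG : G.Connected) (e : Sym2 V) :
    ∀ n v, (G.deleteEdges {e}).Reachable s v → (G.deleteEdges {e}).dist s v = n →
      ((HH G s).deleteEdges {e}).Reachable s v ∧
      ((HH G s).deleteEdges {e}).dist s v = (G.deleteEdges {e}).dist s v := by
  intro n
  induction n using Nat.strong_induction_on with
  | _ n ih =>
    intro v hr hn
    rcases Nat.eq_zero_or_pos n with rfl | hpos
    · have hv : s = v := hr.dist_eq_zero_iff.mp hn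
      subst hv
      exact ⟨Reachable.refl s, by rw [hn, SimpleGraph.dist_self]⟩
    · have hv : v ≠ s := by
        rintro rfl
        rw [SimpleGraph.dist_self] at hn
        omega
      have hsp := epar_mem hr hv
      have hadjG : (G.deleteEdges {e}).Adj (epar G s e v) v := hsp.1
      have hdu : (G.deleteEdges {e}).dist s (epar G s e v) + 1
          = (G.deleteEdges {e}).dist s v := hsp.2
      have hru : (G.deleteEdges {e}).Reachable s (epar G s e v) :=
        hr.trans hadjG.symm.reachable
      obtain ⟨ihr, ihd⟩ := ih (n - 1) (by omega) (epar G s e v) hru (by omega)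
      have hedge : s(epar G s e v, v) ∈ TEset G s ∪ NEset G s := by
        by_cases hfb : epar G s e v = tpar G s v
        · left
          exact ⟨v, hv, by rw [hfb]⟩
        · right
          exact Set.mem_iUnion.mpr ⟨v, ⟨e, ⟨hr, hv, hfb⟩, rfl⟩⟩
      have hadjH : ((HH G s).deleteEdges {e}).Adj (epar G s e v) v := by
        rw [deleteEdges_adj]
        constructor
        · rw [HH, fromEdgeSet_adj]
          exact ⟨hedge, hadjG.ne⟩
        · simp only [Set.mem_singleton_iff]
          exact (deleteEdges_adj.mp hadjG).2 ∘ Set.mem_singleton_iff.mpr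
      refine ⟨ihr.trans hadjH.reachable, ?_⟩
      have hle : ((HH G s).deleteEdges {e}).dist s v
          ≤ (G.deleteEdges {e}).dist s v := by
        have := dist_le_add_one ihr hadjH
        omega
      have hge : (G.deleteEdges {e}).dist s v ≤ ((HH G s).deleteEdges {e}).dist s v :=
        dist_mono (del_mono (HH_le hG) {e}) (ihr.trans hadjH.reachable)
      omega

/-- Per-vertex depth bound. -/
lemma NEv_card_le_depth (hG : G.Connected) (v : V) :
    (NEv G s v).ncard ≤ G.dist s v := by
  have h1 : fbSet G s v ⊆ piE G s v := by
    rintro e ⟨hre, hv, hfb⟩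
    exact fb_mem_piE hG hv hfb
  have h2 : piE G s v = (fun m => piEdge G s m v) '' Set.Iio (G.dist s v) := by
    ext x
    constructor
    · rintro ⟨m, hm, rfl⟩; exact ⟨m, hm, rfl⟩
    · rintro ⟨m, hm, rfl⟩; exact ⟨m, hm, rfl⟩
  calc (NEv G s v).ncard ≤ (fbSet G s v).ncard := Set.ncard_image_le (Set.toFinite _)
    _ ≤ (piE G s v).ncard := Set.ncard_le_ncard h1 (Set.toFinite _)
    _ ≤ (Set.Iio (G.dist s v)).ncard := by rw [h2]; exact Set.ncard_image_le (Set.toFinite _)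
    _ = G.dist s v := by
        rw [show Set.Iio (G.dist s v) = ↑(Finset.range (G.dist s v)) by
          ext m; simp [Finset.mem_range]]
        rw [Set.ncard_coe_finset, Finset.card_range]

/-- Per-vertex sqrt bound. -/
lemma NEv_card_le_sqrt (hG : G.Connected) (v : V) :
    (NEv G s v).ncard ≤ ⌈Real.sqrt (2 * (Fintype.card V : ℝ))⌉₊ := by
  classical
  rcases (NEv G s v).eq_empty_or_nonempty with hemp | hne
  · simp [hemp]
  obtain ⟨x0, e0, he0, _⟩ := hne
  have hv : v ≠ s := he0.2.1
  set P := NEv G s v with hP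
  set Q := P.toFinite.toFinset with hQ
  have hQcard : Q.card = P.ncard := (Set.ncard_eq_toFinset_card P P.toFinite).symm
  have hch : ∀ x : {y // y ∈ Q}, ∃ e, e ∈ fbSet G s v ∧ s(epar G s e v, v) = x.1 := by
    rintro ⟨x, hx⟩
    rw [hQ, Set.Finite.mem_toFinset] at hx
    obtain ⟨e, he, hxe⟩ := hx
    exact ⟨e, he, hxe⟩
  choose E hE1 hE2 using hch
  -- distinct elements give distinct parents
  have hpar : ∀ x y : {y // y ∈ Q}, x ≠ y → epar G s (E x) v ≠ epar G s (E y) v := by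
    intro x y hxy habs
    apply hxy
    have : x.1 = y.1 := by rw [← hE2 x, ← hE2 y, habs]
    exact Subtype.ext this
  -- index function
  have hEpi : ∀ x : {y // y ∈ Q}, E x ∈ piE G s v := fun x =>
    fb_mem_piE hG hv (hE1 x).2.2
  set f : {y // y ∈ Q} → ℕ := fun x => kdx G s v (E x) with hf
  have hfspec : ∀ x, f x < G.dist s v ∧ E x = piEdge G s (f x) v := fun x =>
    kdx_spec (hEpi x)
  have hfinj : Set.InjOn f (Finset.univ : Finset {y // y ∈ Q}) := by
    intro x _ y _ hxy
    by_contra hne2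
    apply hpar x y hne2
    have : E x = E y := by
      rw [(hfspec x).2, (hfspec y).2, hxy]
    rw [this]
  -- interiors
  set I : {y // y ∈ Q} → Set V :=
    fun x => (fun t => echain G s (E x) t v) '' Set.Ioo 0 (hitT G s (E x) v) with hI
  set J : {y // y ∈ Q} → Finset V := fun x => (I x).toFinite.toFinset with hJ
  have hJdisj : ∀ x ∈ (Finset.univ : Finset {y // y ∈ Q}), ∀ y ∈ Finset.univ,
      x ≠ y → Disjoint (J x) (J y) := by
    intro x _ y _ hxy
    rw [hJ]
    rw [Set.Finite.disjoint_toFinset]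
    exact interiors_disjoint hG hv (hE1 x).1 (hE1 y).1 (hE1 x).2.2 (hE1 y).2.2
      (hpar x y hxy)
  have hJcard : ∀ x : {y // y ∈ Q}, f x ≤ (J x).card := by
    intro x
    have hTge := hitT_ge hG hv (hE1 x).1 (hE1 x).2.2 (hfspec x).1 (hfspec x).2
    have hTle := (hitT_spec hG (hE1 x).1 hv).2.1
    have hinj : Set.InjOn (fun t => echain G s (E x) t v) (Set.Ioo 0 (hitT G s (E x) v)) := by
      intro a ⟨_, ha⟩ b ⟨_, hb⟩ hab
      have hda := (echain_dist (hE1 x).1 a (by omega)).1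
      have hdb := (echain_dist (hE1 x).1 b (by omega)).1
      simp only at hab
      rw [hab] at hda
      omega
    have h1 : (J x).card = (I x).ncard := (Set.ncard_eq_toFinset_card _ _).symm
    have h2 : (I x).ncard = (Set.Ioo 0 (hitT G s (E x) v)).ncard :=
      Set.ncard_image_of_injOn hinj
    have h3 : (Set.Ioo 0 (hitT G s (E x) v)).ncard = hitT G s (E x) v - 1 := by
      rw [show Set.Ioo 0 (hitT G s (E x) v) = ↑(Finset.Ioo 0 (hitT G s (E x) v)) by
        ext m; simp]
      rw [Set.ncard_coe_finset, Nat.card_Ioo]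
      omega
    omega
  -- sum bound
  have hsum : ∑ x : {y // y ∈ Q}, f x ≤ Fintype.card V := by
    calc ∑ x : {y // y ∈ Q}, f x ≤ ∑ x : {y // y ∈ Q}, (J x).card :=
          Finset.sum_le_sum (fun x _ => hJcard x)
      _ = (Finset.univ.biUnion J).card := (Finset.card_biUnion hJdisj).symm
      _ ≤ Fintype.card V := by
          calc (Finset.univ.biUnion J).card ≤ (Finset.univ : Finset V).card :=
                Finset.card_le_card (Finset.subset_univ _)
            _ = Fintype.card V := Finset.card_univ
  have hcard2 : (Finset.univ : Finset {y // y ∈ Q}).card = P.ncard := by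
    rw [Finset.card_univ, Fintype.card_coe, hQcard]
  have hmain := sum_sq (Finset.univ : Finset {y // y ∈ Q}) f hfinj
  rw [hcard2] at hmain
  have hn1 : 1 ≤ Fintype.card V := by
    have : Nonempty V := hG.nonempty
    exact Fintype.card_pos
  exact K_bound hn1 (by omega)

end Del


lemma ncard_NEset_le [Fintype V] [LinearOrder V] (G : SimpleGraph V) (s : V) :
    (NEset G s).ncard ≤ ∑ v : V, (NEv G s v).ncard := by
  classical
  have hsub : (NEset G s).toFinite.toFinset ⊆
      Finset.univ.biUnion (fun v => (NEv G s v).toFinite.toFinset) := by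
    intro x hx
    rw [Set.Finite.mem_toFinset] at hx
    obtain ⟨_, ⟨v, rfl⟩, hxv⟩ := hx
    exact Finset.mem_biUnion.mpr ⟨v, Finset.mem_univ v, (Set.Finite.mem_toFinset _).mpr hxv⟩
  calc (NEset G s).ncard = (NEset G s).toFinite.toFinset.card :=
        Set.ncard_eq_toFinset_card _ _
    _ ≤ (Finset.univ.biUnion (fun v => (NEv G s v).toFinite.toFinset)).card :=
        Finset.card_le_card hsub
    _ ≤ ∑ v : V, (NEv G s v).toFinite.toFinset.card := Finset.card_biUnion_le
    _ = ∑ v : V, (NEv G s v).ncard := by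
        apply Finset.sum_congr rfl
        intro v _
        exact (Set.ncard_eq_toFinset_card _ _).symm

lemma ncard_TEset_le [Fintype V] [LinearOrder V] (G : SimpleGraph V) (s : V) :
    (TEset G s).ncard ≤ Fintype.card V := by
  calc (TEset G s).ncard ≤ ({v | v ≠ s} : Set V).ncard :=
        Set.ncard_image_le (Set.toFinite _)
    _ ≤ (Set.univ : Set V).ncard := Set.ncard_le_ncard (Set.subset_univ _) (Set.toFinite _)
    _ = Fintype.card V := by rw [Set.ncard_univ, Nat.card_eq_fintype_card]


end FTBFS

open SimpleGraph

/-- Every connected graph `G` on `n` vertices admits, for every source `s`, an edge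
FT-BFS structure with at most `n + n · min(Depth(s), ⌈√(2n)⌉)` edges, where
`Depth(s)` is the eccentricity of `s`. -/
theorem ftbfs_upper_bound {V : Type*} [Fintype V] (G : SimpleGraph V)
    (hG : G.Connected) (s : V) :
    ∃ H : SimpleGraph V, IsFTBFS G H s ∧
      H.edgeSet.ncard ≤ Fintype.card V +
        Fintype.card V *
          min (Finset.univ.sup fun v => G.dist s v)
            ⌈Real.sqrt (2 * (Fintype.card V : ℝ))⌉₊ := by
  classical
  letI : LinearOrder V := LinearOrder.lift' (fun v => Fintype.equivFin V v)
    (Fintype.equivFin V).injective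
  refine ⟨FTBFS.HH G s, ⟨FTBFS.HH_le hG, ?_⟩, ?_⟩
  · intro e _ v
    constructor
    · constructor
      · intro h
        exact h.mono (FTBFS.del_mono (FTBFS.HH_le hG) {e})
      · intro h
        exact (FTBFS.correct hG e ((G.deleteEdges {e}).dist s v) v h rfl).1
    · intro h
      exact (FTBFS.correct hG e ((G.deleteEdges {e}).dist s v) v h rfl).2
  · set D := Finset.univ.sup fun v => G.dist s v with hD
    set K := ⌈Real.sqrt (2 * (Fintype.card V : ℝ))⌉₊ with hK
    have hsub : (FTBFS.HH G s).edgeSet ⊆ FTBFS.TEset G s ∪ FTBFS.NEset G s := by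
      rw [FTBFS.HH, edgeSet_fromEdgeSet]
      exact Set.diff_subset
    have hNEv : ∀ v : V, (FTBFS.NEv G s v).ncard ≤ min D K := by
      intro v
      refine le_min ?_ (FTBFS.NEv_card_le_sqrt hG v)
      calc (FTBFS.NEv G s v).ncard ≤ G.dist s v := FTBFS.NEv_card_le_depth hG v
        _ ≤ D := Finset.le_sup (Finset.mem_univ v)
    calc (FTBFS.HH G s).edgeSet.ncard
        ≤ (FTBFS.TEset G s ∪ FTBFS.NEset G s).ncard :=
          Set.ncard_le_ncard hsub (Set.toFinite _)
      _ ≤ (FTBFS.TEset G s).ncard + (FTBFS.NEset G s).ncard := Set.ncard_union_le _ _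
      _ ≤ Fintype.card V + (FTBFS.NEset G s).ncard := by
          have := FTBFS.ncard_TEset_le G s
          omega
      _ ≤ Fintype.card V + ∑ v : V, (FTBFS.NEv G s v).ncard := by
          have := FTBFS.ncard_NEset_le G s
          omega
      _ ≤ Fintype.card V + ∑ _v : V, min D K := by
          have := Finset.sum_le_sum (fun v (_ : v ∈ Finset.univ) => hNEv v)
          omega
      _ = Fintype.card V + Fintype.card V * min D K := by
          rw [Finset.sum_const, Finset.card_univ, smul_eq_mul]
end

section
/- Let G be a finite connected simple graph and s a vertex. Let T₀ be a spanning subgraph of G such that every vertex v is connected to s in T₀ and dist(s,v,T₀) = dist(s,v,G) for all v. For each edge e of T₀, let T_e be a spanning subgraph of G∖e such that for every vertex v connected to s in G∖e, v is connected to s in T_e and dist(s,v,T_e) = dist(s,v,G∖e). Then the spanning subgraph H whose edge set is E(T₀) ∪ ⋃_{e ∈ E(T₀)} E(T_e) is an edge FT-BFS structure for G with respect to s. -/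
open SimpleGraph

/-- If `T₀` is a BFS structure (shortest-path preserving spanning subgraph) of a
connected graph `G` rooted at `s`, and for every edge `e` of `T₀` the subgraph `T e`
is a BFS structure of `G ∖ e` rooted at `s`, then the spanning subgraph with edge
set `E(T₀) ∪ ⋃_{e ∈ E(T₀)} E(T e)` is an edge FT-BFS structure for `G` w.r.t. `s`. -/
theorem union_of_replacement_bfs_is_ftbfs {V : Type*} [Fintype V]
    (G : SimpleGraph V) (hG : G.Connected) (s : V)
    (T₀ : SimpleGraph V) (hT₀le : T₀ ≤ G)
    (hT₀ : ∀ v : V, T₀.Reachable s v ∧ T₀.dist s v = G.dist s v)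
    (T : Sym2 V → SimpleGraph V)
    (hTle : ∀ e ∈ T₀.edgeSet, T e ≤ G.deleteEdges {e})
    (hT : ∀ e ∈ T₀.edgeSet, ∀ v : V, (G.deleteEdges {e}).Reachable s v →
      (T e).Reachable s v ∧ (T e).dist s v = (G.deleteEdges {e}).dist s v) :
    IsFTBFS G
      (SimpleGraph.fromEdgeSet (T₀.edgeSet ∪ ⋃ e ∈ T₀.edgeSet, (T e).edgeSet)) s := by
  set H := SimpleGraph.fromEdgeSet (T₀.edgeSet ∪ ⋃ e ∈ T₀.edgeSet, (T e).edgeSet) with hH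
  have hHle : H ≤ G := by
    intro u v huv
    rw [hH, fromEdgeSet_adj] at huv
    obtain ⟨hmem, hne⟩ := huv
    rcases hmem with h | h
    · exact hT₀le h
    · simp only [Set.mem_iUnion] at h
      obtain ⟨e, he, hmem⟩ := h
      exact (deleteEdges_le _) ((hTle e he) hmem)
  refine ⟨hHle, ?_⟩
  intro e he v
  -- a key: for any edge e, H.deleteEdges {e} ≤ G.deleteEdges {e}
  have hHGe : H.deleteEdges {e} ≤ G.deleteEdges {e} := by
    intro u w huw
    rw [deleteEdges_adj] at huw ⊢
    exact ⟨hHle huw.1, huw.2⟩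
  by_cases heT : e ∈ T₀.edgeSet
  · -- use T e ≤ H.deleteEdges {e}
    have hTeH : T e ≤ H.deleteEdges {e} := by
      intro u w huw
      rw [deleteEdges_adj]
      have h2 := (hTle e heT) huw
      rw [deleteEdges_adj] at h2
      refine ⟨?_, h2.2⟩
      rw [hH, fromEdgeSet_adj]
      refine ⟨Or.inr ?_, (T e).ne_of_adj huw⟩
      simp only [Set.mem_iUnion]
      exact ⟨e, heT, huw⟩
    constructor
    · constructor
      · exact fun h => h.mono hHGe
      · intro h
        exact ((hT e heT v h).1).mono hTeH
    · intro h
      obtain ⟨hreach, hdist⟩ := hT e heT v h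
      have hreachH := hreach.mono hTeH
      have h1 : (G.deleteEdges {e}).dist s v ≤ (H.deleteEdges {e}).dist s v :=
        hreachH.dist_anti hHGe
      have h2 : (H.deleteEdges {e}).dist s v ≤ (T e).dist s v :=
        hreach.dist_anti hTeH
      omega
  · -- T₀ ≤ H.deleteEdges {e}
    have hT₀H : T₀ ≤ H.deleteEdges {e} := by
      intro u w huw
      rw [deleteEdges_adj]
      constructor
      · rw [hH, fromEdgeSet_adj]
        exact ⟨Or.inl huw, T₀.ne_of_adj huw⟩
      · intro hmem
        rw [Set.mem_singleton_iff] at hmem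
        exact heT (hmem ▸ (show s(u, w) ∈ T₀.edgeSet from huw))
    have hreach := ((hT₀ v).1).mono hT₀H
    constructor
    · exact ⟨fun h => h.mono hHGe, fun _ => hreach⟩
    · intro h
      have h1 : (G.deleteEdges {e}).dist s v ≤ (H.deleteEdges {e}).dist s v :=
        hreach.dist_anti hHGe
      have h2 : (H.deleteEdges {e}).dist s v ≤ T₀.dist s v :=
        ((hT₀ v).1).dist_anti hT₀H
      have h3 : G.dist s v ≤ (G.deleteEdges {e}).dist s v :=
        h.dist_anti (deleteEdges_le _)
      have h4 := (hT₀ v).2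
      omega
end

section
/- Let G be a finite simple graph with m edges and let e₁, …, e_m be any enumeration of its edges. Define the weight function W by W(e_k) = 2^{m+1} + 2^k. Then W has the unique hop-minimal shortest-path property on G: for every subgraph H of G and every pair of vertices u, v connected in H, there is a unique path from u to v in H of minimum total W-weight, and this path also has the minimum number of edges among all u–v paths in H. -/
open SimpleGraph

/-- The total `w`-weight of a walk: the sum of `w` over its edges. -/
def walkWeight {V : Type*} {G : SimpleGraph V} (w : Sym2 V → ℝ) {u v : V}
    (p : G.Walk u v) : ℝ :=
  (p.edges.map w).sum

/-- `w` has the unique hop-minimal shortest-path property on `G`: for every subgraph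
`H` of `G` and every pair of vertices `u`, `v` connected in `H`, there is a unique
path from `u` to `v` in `H` of minimum total `w`-weight, and this path also has the
minimum number of edges among all `u`–`v` paths in `H`. -/
def UniqueHopMinimal {V : Type*} (G : SimpleGraph V) (w : Sym2 V → ℝ) : Prop :=
  ∀ H : SimpleGraph V, H ≤ G → ∀ u v : V, H.Reachable u v →
    ∃ p : H.Walk u v, p.IsPath ∧
      (∀ q : H.Walk u v, q.IsPath → q ≠ p → walkWeight w p < walkWeight w q) ∧
      (∀ q : H.Walk u v, q.IsPath → p.length ≤ q.length)

/-- A path between two fixed vertices is determined by the set of its edges. -/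
lemma path_eq_of_edges_mem {V : Type*} {H : SimpleGraph V} {u v : V}
    (p : H.Walk u v) : ∀ q : H.Walk u v, p.IsPath → q.IsPath →
      (∀ e, e ∈ p.edges ↔ e ∈ q.edges) → p = q := by
  induction p with
  | nil =>
    intro q _ _ hmem
    cases q with
    | nil => rfl
    | cons h' q' =>
      have h0 : _ ∈ (Walk.cons h' q').edges := List.mem_cons_self
      have := (hmem _).2 h0
      simp at this
  | cons h p ih =>
    intro q hp hq hmem
    cases q with
    | nil =>
      have h0 : _ ∈ (Walk.cons h p).edges := List.mem_cons_self
      have := (hmem _).1 h0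
      simp at this
    | cons h' q' =>
      obtain ⟨hp', hup'⟩ := (Walk.cons_isPath_iff _ _).1 hp
      obtain ⟨hq', huq'⟩ := (Walk.cons_isPath_iff _ _).1 hq
      have h0 : _ ∈ (Walk.cons h p).edges := List.mem_cons_self
      have hmem1 := (hmem _).1 h0
      rw [Walk.edges_cons, List.mem_cons] at hmem1
      rcases hmem1 with heq | hin
      · have hxy := Sym2.congr_right.mp heq
        subst hxy
        have hmem' : ∀ e, e ∈ p.edges ↔ e ∈ q'.edges := by
          intro e
          constructor
          · intro hep
            have := (hmem e).1 (by simp [hep])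
            rw [Walk.edges_cons, List.mem_cons] at this
            rcases this with rfl | h2
            · exact absurd (Walk.fst_mem_support_of_mem_edges p hep) hup'
            · exact h2
          · intro heq'
            have := (hmem e).2 (by simp [heq'])
            rw [Walk.edges_cons, List.mem_cons] at this
            rcases this with rfl | h2
            · exact absurd (Walk.fst_mem_support_of_mem_edges q' heq') huq'
            · exact h2
        rw [ih q' hp' hq' hmem']
      · exact absurd (Walk.fst_mem_support_of_mem_edges q' hin) huq'

/-- Summing a function of list elements as a sum over constants plus powers. -/
lemma list_sum_split {α : Type*} (g : α → ℕ) (c : ℕ) (l : List α) :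
    (l.map (fun e => c + g e)).sum = l.length * c + (l.map g).sum := by
  induction l with
  | nil => simp
  | cons a l ih =>
    simp only [List.map_cons, List.sum_cons, List.length_cons, ih]
    ring

/-- If the `m` edges `e_1, …, e_m` of `G` are assigned the weights
`W(e_k) = 2^{m+1} + 2^k`, then `W` has the unique hop-minimal shortest-path
property on `G`. -/
theorem powers_weight_unique_hop_minimal {V : Type*} [Fintype V]
    (G : SimpleGraph V) (m : ℕ) (hm : G.edgeSet.ncard = m)
    (f : Fin m → Sym2 V) (hinj : Function.Injective f)
    (hrange : Set.range f = G.edgeSet)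
    (w : Sym2 V → ℝ)
    (hw : ∀ k : Fin m, w (f k) = 2 ^ (m + 1) + 2 ^ (k.val + 1)) :
    UniqueHopMinimal G w := by
  classical
  intro H hHG u v hr
  have hsubG : ∀ {a b : V} (p : H.Walk a b) {e : Sym2 V}, e ∈ p.edges → e ∈ G.edgeSet := by
    intro a b p e he
    exact edgeSet_mono hHG (p.edges_subset_edgeSet he)
  set idx : Sym2 V → ℕ := fun e =>
    if h : ∃ k : Fin m, f k = e then (h.choose : Fin m).val else 0 with hidx_def
  have hidx_spec : ∀ e ∈ G.edgeSet, ∃ h : idx e < m, f ⟨idx e, h⟩ = e := by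
    intro e he
    rw [← hrange] at he
    obtain ⟨k, hk⟩ := he
    have hcond : ∃ k : Fin m, f k = e := ⟨k, hk⟩
    simp only [hidx_def, dif_pos hcond]
    exact ⟨hcond.choose.isLt, by rw [Fin.eta]; exact hcond.choose_spec⟩
  have hwval : ∀ e ∈ G.edgeSet, w e = ((2 ^ (m + 1) + 2 ^ (idx e + 1) : ℕ) : ℝ) := by
    intro e he
    obtain ⟨h1, h2⟩ := hidx_spec e he
    have h3 := hw ⟨idx e, h1⟩
    rw [h2] at h3
    rw [h3]
    push_cast
    ring
  have hidx_inj : ∀ e₁ ∈ G.edgeSet, ∀ e₂ ∈ G.edgeSet, idx e₁ = idx e₂ → e₁ = e₂ := by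
    intro e₁ h1 e₂ h2 h
    obtain ⟨l1, hf1⟩ := hidx_spec e₁ h1
    obtain ⟨l2, hf2⟩ := hidx_spec e₂ h2
    rw [← hf1, ← hf2]
    congr 1
    exact Fin.ext h
  -- the finset of (shifted) indices of the edges of a walk
  set S : H.Walk u v → Finset ℕ :=
    fun p => (p.edges.map (fun e => idx e + 1)).toFinset with hS_def
  -- the natural-number weight of a walk
  set N : H.Walk u v → ℕ :=
    fun p => p.length * 2 ^ (m + 1) + ∑ k ∈ S p, 2 ^ k with hN_def
  have hnodup : ∀ p : H.Walk u v, p.IsPath → (p.edges.map (fun e => idx e + 1)).Nodup := by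
    intro p hp
    refine List.Nodup.map_on ?_ hp.edges_nodup
    intro e₁ h1 e₂ h2 h
    exact hidx_inj e₁ (hsubG p h1) e₂ (hsubG p h2) (by omega)
  -- (A) the weight equals the natural-number weight
  have hN_weight : ∀ p : H.Walk u v, p.IsPath → walkWeight w p = (N p : ℝ) := by
    intro p hp
    have h1 : p.edges.map w
        = p.edges.map (fun e => ((2 ^ (m + 1) + 2 ^ (idx e + 1) : ℕ) : ℝ)) :=
      List.map_congr_left fun e he => hwval e (hsubG p he)
    have h2 : p.edges.map (fun e => ((2 ^ (m + 1) + 2 ^ (idx e + 1) : ℕ) : ℝ))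
        = (p.edges.map (fun e => (2 ^ (m + 1) + 2 ^ (idx e + 1) : ℕ))).map
            (fun n : ℕ => (n : ℝ)) := by
      rw [List.map_map]; rfl
    rw [walkWeight, h1, h2, ← Nat.cast_list_sum]
    congr 1
    rw [hN_def]
    have h3 := list_sum_split (fun e => 2 ^ (idx e + 1)) (2 ^ (m + 1)) p.edges
    rw [h3, Walk.length_edges]
    congr 1
    have h4 : ∑ k ∈ S p, 2 ^ k
        = ((p.edges.map (fun e => idx e + 1)).map (fun k => 2 ^ k)).sum :=
      List.sum_toFinset _ (hnodup p hp)
    rw [h4, List.map_map]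
    rfl
  -- (B) the index part is smaller than 2^(m+1)
  have hS_lt : ∀ p : H.Walk u v, (∑ k ∈ S p, 2 ^ k) < 2 ^ (m + 1) := by
    intro p
    refine Nat.geomSum_lt le_rfl ?_
    intro k hk
    rw [hS_def, List.mem_toFinset, List.mem_map] at hk
    obtain ⟨e, he, rfl⟩ := hk
    obtain ⟨hlt, -⟩ := hidx_spec e (hsubG p he)
    omega
  -- key arithmetic: length is recoverable from N
  have hlen_eq : ∀ p : H.Walk u v, N p / 2 ^ (m + 1) = p.length := by
    intro p
    have h0 : N p = ∑ k ∈ S p, 2 ^ k + 2 ^ (m + 1) * p.length := by rw [hN_def]; ring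
    rw [h0, Nat.add_mul_div_left _ _ (by positivity), Nat.div_eq_of_lt (hS_lt p), zero_add]
  -- (C) equal N implies equal paths
  have hN_inj : ∀ p q : H.Walk u v, p.IsPath → q.IsPath → N p = N q → p = q := by
    intro p q hp hq hN
    have hl : p.length = q.length := by
      rw [← hlen_eq p, ← hlen_eq q, hN]
    have hsum : ∑ k ∈ S p, 2 ^ k = ∑ k ∈ S q, 2 ^ k := by
      rw [hN_def] at hN
      simp only [hl] at hN
      omega
    have hSeq : S p = S q := Finset.geomSum_injective le_rfl hsum
    refine path_eq_of_edges_mem p q hp hq ?_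
    intro e
    constructor
    · intro he
      have h1 : idx e + 1 ∈ S q := by
        rw [← hSeq, hS_def, List.mem_toFinset, List.mem_map]
        exact ⟨e, he, rfl⟩
      rw [hS_def, List.mem_toFinset, List.mem_map] at h1
      obtain ⟨e', he', hee⟩ := h1
      have : e' = e := hidx_inj e' (hsubG q he') e (hsubG p he) (by omega)
      rwa [← this]
    · intro he
      have h1 : idx e + 1 ∈ S p := by
        rw [hSeq, hS_def, List.mem_toFinset, List.mem_map]
        exact ⟨e, he, rfl⟩
      rw [hS_def, List.mem_toFinset, List.mem_map] at h1
      obtain ⟨e', he', hee⟩ := h1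
      have : e' = e := hidx_inj e' (hsubG p he') e (hsubG q he) (by omega)
      rwa [← this]
  -- (D) pick a path of minimal N
  have hne : Nonempty (H.Path u v) := hr.elim fun p => ⟨p.toPath⟩
  obtain ⟨P, -, hmin⟩ := Finset.exists_min_image (Finset.univ : Finset (H.Path u v))
    (fun P => N P.val) Finset.univ_nonempty
  refine ⟨P.val, P.prop, ?_, ?_⟩
  · intro q hq hqne
    have hle : N P.val ≤ N q := hmin ⟨q, hq⟩ (Finset.mem_univ _)
    have hneq : N P.val ≠ N q := fun h => hqne (hN_inj q P.val hq P.prop h.symm)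
    rw [hN_weight _ P.prop, hN_weight _ hq]
    exact_mod_cast lt_of_le_of_ne hle hneq
  · intro q hq
    by_contra hlen
    push_neg at hlen
    have h1 : N q < (q.length + 1) * 2 ^ (m + 1) := by
      have := hS_lt q
      rw [hN_def]
      simp only []
      nlinarith [hS_lt q]
    have h2 : (q.length + 1) * 2 ^ (m + 1) ≤ P.val.length * 2 ^ (m + 1) :=
      Nat.mul_le_mul_right _ (by omega)
    have h3 : P.val.length * 2 ^ (m + 1) ≤ N P.val := Nat.le_add_right _ _
    have h4 : N P.val ≤ N q := hmin ⟨q, hq⟩ (Finset.mem_univ _)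
    omega
end

section
/- Let G be a finite simple graph, w a positive edge-weight function with the unique hop-minimal shortest-path property, s a vertex, and v a vertex connected to s in G with v ≠ s. Then |New(s,v)| ≤ min( dist(s,v,G), deg_G(v) ), where dist(s,v,G) is the unweighted shortest-path distance and deg_G(v) is the degree of v in G. -/
open SimpleGraph

/-- `p` is a `w`-shortest path from `u` to `v` in `H`. (When `w` has the unique
hop-minimal shortest-path property, such a path is the unique path `π_H(u,v)`.) -/
def IsMinPath {V : Type*} (H : SimpleGraph V) (w : Sym2 V → ℝ) {u v : V}
    (p : H.Walk u v) : Prop :=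
  p.IsPath ∧ ∀ q : H.Walk u v, q.IsPath → walkWeight w p ≤ walkWeight w q

/-- `T₀(s)`: the set of edges lying on some `w`-shortest path from `s` in `G`. -/
def bfsEdges {V : Type*} (G : SimpleGraph V) (w : Sym2 V → ℝ) (s : V) : Set (Sym2 V) :=
  {e | ∃ (v : V) (p : G.Walk s v), IsMinPath G w p ∧ e ∈ p.edges}

/-- `New(s,v)`: the last edges of the replacement paths `π_{G∖e}(s,v)`, over failed
edges `e ∈ T₀(s)` with `s`, `v` still connected in `G∖e`, excluding edges of `T₀(s)`. -/
def newEdges {V : Type*} (G : SimpleGraph V) (w : Sym2 V → ℝ) (s v : V) :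
    Set (Sym2 V) :=
  {e' | e' ∉ bfsEdges G w s ∧ ∃ e ∈ bfsEdges G w s,
    ∃ p : (G.deleteEdges {e}).Walk s v, IsMinPath (G.deleteEdges {e}) w p ∧
      p.edges.getLast? = some e'}

/-- helper: weight is preserved by transfer -/
lemma walkWeight_transfer {V : Type*} {G H : SimpleGraph V} (w : Sym2 V → ℝ) {u v : V}
    (p : G.Walk u v) (h : ∀ e ∈ p.edges, e ∈ H.edgeSet) :
    walkWeight w (p.transfer H h) = walkWeight w p := by
  simp [walkWeight, Walk.edges_transfer]

/-- helper: first edge of a walk contains its start -/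
lemma start_mem_head_edge {V : Type*} {H : SimpleGraph V} {a b : V} (q : H.Walk a b)
    {e : Sym2 V} (h : q.edges.head? = some e) : a ∈ e := by
  cases q with
  | nil => simp at h
  | cons hadj r =>
    simp only [Walk.edges_cons, List.head?_cons, Option.some.injEq] at h
    subst h; simp

/-- helper: last edge of a walk contains its end -/
lemma end_mem_getLast_edge {V : Type*} {H : SimpleGraph V} {a b : V} (p : H.Walk a b)
    {e : Sym2 V} (h : p.edges.getLast? = some e) : b ∈ e := by
  have h' : p.reverse.edges.head? = some e := by
    rw [Walk.edges_reverse, List.head?_reverse]; exact h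
  exact start_mem_head_edge p.reverse h'

/-- uniqueness of min paths -/
lemma minPath_unique {V : Type*} {G H : SimpleGraph V} {w : Sym2 V → ℝ}
    (huhm : UniqueHopMinimal G w) (hH : H ≤ G) {u v : V}
    {p q : H.Walk u v} (hp : IsMinPath H w p) (hq : IsMinPath H w q) : p = q := by
  obtain ⟨r, hr, hstrict, -⟩ := huhm H hH u v ⟨p⟩
  have key : ∀ x : H.Walk u v, IsMinPath H w x → x = r := by
    intro x hx
    by_contra hne
    exact absurd (hx.2 r hr) (not_le.mpr (hstrict x hx.1 hne))
  rw [key p hp, key q hq]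

/-- `|New(s,v)| ≤ min(dist(s,v,G), deg_G(v))`. -/
theorem newEdges_card_le_min {V : Type*} [Fintype V]
    (G : SimpleGraph V) (w : Sym2 V → ℝ)
    (hpos : ∀ e ∈ G.edgeSet, 0 < w e) (huhm : UniqueHopMinimal G w)
    (s v : V) (hconn : G.Reachable s v) (hne : v ≠ s) :
    (newEdges G w s v).ncard ≤ min (G.dist s v) (G.neighborSet v).ncard := by
  rw [le_min_iff]
  constructor
  · -- dist bound
    obtain ⟨p₀, hp₀path, hstrict, hhop⟩ := huhm G le_rfl s v hconn
    have hp₀min : IsMinPath G w p₀ := by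
      refine ⟨hp₀path, fun q hq => ?_⟩
      by_cases h : q = p₀
      · subst h; exact le_rfl
      · exact (hstrict q hq h).le
    set S : Set (Sym2 V) := {x | x ∈ p₀.edges} with hS
    classical
    set g : Sym2 V → Sym2 V := fun e =>
      if h : ∃ p : (G.deleteEdges {e}).Walk s v, IsMinPath (G.deleteEdges {e}) w p then
        (h.choose.edges.getLast?).getD e else e with hg
    have hsub : newEdges G w s v ⊆ g '' S := by
      rintro e' ⟨hnot, e, he, p, hmin, hlast⟩
      have hemem : e ∈ p₀.edges := by
        by_contra hnm
        -- transfer p₀ into G∖e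
        have hp₀e : ∀ x ∈ p₀.edges, x ∈ (G.deleteEdges {e}).edgeSet := by
          intro x hx
          rw [edgeSet_deleteEdges]
          exact ⟨p₀.edges_subset_edgeSet hx, by simp; rintro rfl; exact hnm hx⟩
        have p₀' := p₀.transfer (G.deleteEdges {e}) hp₀e
        -- transfer p into G
        have hpG : ∀ x ∈ p.edges, x ∈ G.edgeSet :=
          fun x hx => edgeSet_mono (deleteEdges_le _) (p.edges_subset_edgeSet hx)
        have hpGmin : IsMinPath G w (p.transfer G hpG) := by
          refine ⟨hmin.1.transfer _, fun q hq => ?_⟩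
          calc walkWeight w (p.transfer G hpG) = walkWeight w p := walkWeight_transfer w p hpG
            _ ≤ walkWeight w (p₀.transfer _ hp₀e) := hmin.2 _ (hp₀path.transfer _)
            _ = walkWeight w p₀ := walkWeight_transfer w p₀ hp₀e
            _ ≤ walkWeight w q := hp₀min.2 q hq
        exact hnot ⟨v, p.transfer G hpG, hpGmin, by
          rw [Walk.edges_transfer]
          exact List.mem_of_getLast? hlast⟩
      refine ⟨e, hemem, ?_⟩
      have hex : ∃ p : (G.deleteEdges {e}).Walk s v, IsMinPath (G.deleteEdges {e}) w p :=
        ⟨p, hmin⟩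
      have hchoose : hex.choose = p :=
        minPath_unique huhm (deleteEdges_le _) hex.choose_spec hmin
      simp only [hg, dif_pos hex, hchoose, hlast, Option.getD_some]
    have hSfin : S.Finite := p₀.edges.finite_toSet
    calc (newEdges G w s v).ncard ≤ (g '' S).ncard :=
          Set.ncard_le_ncard hsub (hSfin.image g)
      _ ≤ S.ncard := Set.ncard_image_le hSfin
      _ ≤ p₀.edges.length := by
          have : S = ↑p₀.edges.toFinset := by ext x; simp [hS]
          rw [this, Set.ncard_coe_finset]
          exact p₀.edges.toFinset_card_le
      _ = p₀.length := p₀.length_edges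
      _ ≤ G.dist s v := by
          obtain ⟨q, hq⟩ := hconn.exists_walk_length_eq_dist
          calc p₀.length ≤ q.bypass.length := hhop q.bypass q.bypass_isPath
            _ ≤ q.length := Walk.length_bypass_le q
            _ = G.dist s v := hq
  · -- degree bound
    have hsub : newEdges G w s v ⊆ (fun u => s(u, v)) '' (G.neighborSet v) := by
      rintro e' ⟨hnot, e, he, p, hmin, hlast⟩
      have hv : v ∈ e' := end_mem_getLast_edge p hlast
      have hE : e' ∈ G.edgeSet :=
        edgeSet_mono (deleteEdges_le _)
          (p.edges_subset_edgeSet (List.mem_of_getLast? hlast))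
      obtain ⟨u, rfl⟩ := Sym2.mem_iff_exists.mp hv
      have : G.Adj v u := hE
      exact ⟨u, this, Sym2.eq_swap⟩
    have hinj : Function.Injective (fun u => s(u, v) : V → Sym2 V) := by
      intro a b hab
      exact Sym2.congr_left.mp hab
    calc (newEdges G w s v).ncard ≤ ((fun u => s(u, v)) '' (G.neighborSet v)).ncard :=
          Set.ncard_le_ncard hsub ((G.neighborSet v).toFinite.image _)
      _ = (G.neighborSet v).ncard := Set.ncard_image_of_injective _ hinj
end

section
/- Let G be a finite simple graph on n vertices, w a positive edge-weight function with the unique hop-minimal shortest-path property, S a set of vertices with |S| = σ, and u a vertex connected in G to every s ∈ S. Then |New(S,u)| ≤ σ + √(2·σ·n), where New(S,u) = ( ⋃_{s ∈ S, s ≠ u} { the last edge of π_{G∖e}(s,u) : e ∈ T₀(s) such that s and u are connected in G∖e } ) ∖ ⋃_{s ∈ S} T₀(s). -/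
open SimpleGraph

/-- `New(S,u)`: the last edges of the replacement paths `π_{G∖e}(s,u)`, over sources
`s ∈ S`, `s ≠ u`, and failed edges `e ∈ T₀(s)` with `s`, `u` still connected in
`G∖e`, excluding the edges of `⋃_{s ∈ S} T₀(s)`. -/
def newEdgesMulti {V : Type*} (G : SimpleGraph V) (w : Sym2 V → ℝ) (S : Set V)
    (u : V) : Set (Sym2 V) :=
  {e' | (∀ s ∈ S, e' ∉ bfsEdges G w s) ∧ ∃ s ∈ S, s ≠ u ∧ ∃ e ∈ bfsEdges G w s,
    ∃ p : (G.deleteEdges {e}).Walk s u, IsMinPath (G.deleteEdges {e}) w p ∧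
      p.edges.getLast? = some e'}

namespace NewEdgesProof

open SimpleGraph Walk

variable {V : Type*}

lemma mem_of_getLast?' {α : Type*} {l : List α} {a : α} (h : l.getLast? = some a) : a ∈ l := by
  have hne : l ≠ [] := by rintro rfl; simp at h
  rw [List.getLast?_eq_getLast hne] at h
  exact (Option.some.inj h) ▸ List.getLast_mem hne

lemma getLast?_append_of_ne_nil {α : Type*} {l l' : List α} (h : l' ≠ []) :
    (l ++ l').getLast? = l'.getLast? := by
  obtain ⟨y, hy⟩ := Option.isSome_iff_exists.1 (List.getLast?_isSome.2 h)
  rw [List.getLast?_append, hy]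
  rfl

lemma length_pos_of_ne {H : SimpleGraph V} {a b : V} (p : H.Walk a b) (h : a ≠ b) :
    0 < p.length := by
  cases p with
  | nil => exact absurd rfl h
  | cons h q => simp

lemma edges_ne_nil_of_ne {H : SimpleGraph V} {a b : V} (p : H.Walk a b) (h : a ≠ b) :
    p.edges ≠ [] := by
  have := length_pos_of_ne p h
  rw [← Walk.length_edges] at this
  exact List.ne_nil_of_length_pos this

lemma mem_support_of_mem_sym2 {H : SimpleGraph V} {a b c : V} {p : H.Walk a b} {e : Sym2 V}
    (he : e ∈ p.edges) (hc : c ∈ e) : c ∈ p.support := by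
  induction e with
  | _ x y =>
    rcases Sym2.mem_iff.1 hc with rfl | rfl
    · exact p.fst_mem_support_of_mem_edges he
    · exact p.snd_mem_support_of_mem_edges he

section Weight

variable {w : Sym2 V → ℝ}

lemma walkWeight_append {H : SimpleGraph V} {a b c : V} (p : H.Walk a b) (q : H.Walk b c) :
    walkWeight w (p.append q) = walkWeight w p + walkWeight w q := by
  simp [walkWeight, Walk.edges_append]

lemma walkWeight_transfer {H H' : SimpleGraph V} {a b : V} (p : H.Walk a b)
    (hp : ∀ e ∈ p.edges, e ∈ H'.edgeSet) :
    walkWeight w (p.transfer H' hp) = walkWeight w p := by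
  simp [walkWeight, Walk.edges_transfer]

lemma walkWeight_nonneg {H : SimpleGraph V} (hnn : ∀ e ∈ H.edgeSet, 0 ≤ w e) {a b : V}
    (p : H.Walk a b) : 0 ≤ walkWeight w p := by
  apply List.sum_nonneg
  intro x hx
  obtain ⟨e, he, rfl⟩ := List.mem_map.1 hx
  exact hnn e (p.edges_subset_edgeSet he)

lemma toFinset_sum_le [DecidableEq (Sym2 V)] {l : List (Sym2 V)} (h : ∀ e ∈ l, 0 ≤ w e) :
    ∑ e ∈ l.toFinset, w e ≤ (l.map w).sum := by
  induction l with
  | nil => simp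
  | cons a t ih =>
    simp only [List.toFinset_cons, List.map_cons, List.sum_cons]
    have h0 : 0 ≤ w a := h a List.mem_cons_self
    have ht := ih (fun e he => h e (List.mem_cons_of_mem _ he))
    by_cases ha : a ∈ t.toFinset
    · rw [Finset.insert_eq_self.2 ha]
      linarith
    · rw [Finset.sum_insert ha]
      linarith

lemma exists_path_weight_le {H : SimpleGraph V} (hnn : ∀ e ∈ H.edgeSet, 0 ≤ w e) {a b : V}
    (q : H.Walk a b) : ∃ r : H.Walk a b, r.IsPath ∧ walkWeight w r ≤ walkWeight w q := by
  classical
  refine ⟨q.bypass, q.bypass_isPath, ?_⟩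
  have h1 : walkWeight w q.bypass = ∑ e ∈ q.bypass.edges.toFinset, w e :=
    (List.sum_toFinset _ q.bypass_isPath.edges_nodup).symm
  rw [h1]
  calc ∑ e ∈ q.bypass.edges.toFinset, w e
      ≤ ∑ e ∈ q.edges.toFinset, w e := by
        apply Finset.sum_le_sum_of_subset_of_nonneg
        · intro e he
          rw [List.mem_toFinset] at he ⊢
          exact q.edges_bypass_subset he
        · intro e he _
          rw [List.mem_toFinset] at he
          exact hnn e (q.edges_subset_edgeSet he)
    _ ≤ (q.edges.map w).sum :=
        toFinset_sum_le (fun e he => hnn e (q.edges_subset_edgeSet he))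

lemma isMinPath_le_walk {H : SimpleGraph V} (hnn : ∀ e ∈ H.edgeSet, 0 ≤ w e) {a b : V}
    {p : H.Walk a b} (hp : IsMinPath H w p) (q : H.Walk a b) :
    walkWeight w p ≤ walkWeight w q := by
  obtain ⟨r, hr, hrle⟩ := exists_path_weight_le hnn q
  exact (hp.2 r hr).trans hrle

end Weight

section Min

variable {w : Sym2 V → ℝ} {G : SimpleGraph V}

lemma isMinPath_unique (huhm : UniqueHopMinimal G w) {H : SimpleGraph V} (hle : H ≤ G)
    {a b : V} {p q : H.Walk a b} (hp : IsMinPath H w p) (hq : IsMinPath H w q) : p = q := by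
  obtain ⟨c, hc, hstrict, -⟩ := huhm H hle a b ⟨p⟩
  have h1 : p = c := by
    by_contra hne
    exact absurd (hp.2 c hc) (not_le.2 (hstrict p hp.1 hne))
  have h2 : q = c := by
    by_contra hne
    exact absurd (hq.2 c hc) (not_le.2 (hstrict q hq.1 hne))
  rw [h1, h2]

lemma exists_isMinPath (huhm : UniqueHopMinimal G w) {H : SimpleGraph V} (hle : H ≤ G)
    {a b : V} (hr : H.Reachable a b) : ∃ p : H.Walk a b, IsMinPath H w p := by
  obtain ⟨p, hp, hstrict, -⟩ := huhm H hle a b hr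
  refine ⟨p, hp, fun q hq => ?_⟩
  by_cases h : q = p
  · exact h ▸ le_rfl
  · exact (hstrict q hq h).le

lemma isMinPath_length_le (huhm : UniqueHopMinimal G w) {H : SimpleGraph V} (hle : H ≤ G)
    {a b : V} {p : H.Walk a b} (hp : IsMinPath H w p) {q : H.Walk a b} (hq : q.IsPath) :
    p.length ≤ q.length := by
  obtain ⟨c, hc, hstrict, hhop⟩ := huhm H hle a b ⟨p⟩
  have hcmin : IsMinPath H w c := by
    refine ⟨hc, fun r hr => ?_⟩
    by_cases h : r = c
    · exact h ▸ le_rfl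
    · exact (hstrict r hr h).le
  rw [isMinPath_unique huhm hle hp hcmin]
  exact hhop q hq

lemma isMinPath_of_append_right {H : SimpleGraph V} (hnn : ∀ e ∈ H.edgeSet, 0 ≤ w e)
    {a b c : V} {p : H.Walk a b} {q : H.Walk b c}
    (h : IsMinPath H w (p.append q)) : IsMinPath H w q := by
  refine ⟨h.1.of_append_right, fun r hr => ?_⟩
  by_contra hlt
  push_neg at hlt
  have h2 := isMinPath_le_walk hnn h (p.append r)
  rw [walkWeight_append, walkWeight_append] at h2
  linarith

lemma isMinPath_transfer (huhm : UniqueHopMinimal G w) {H : SimpleGraph V} (hle : H ≤ G)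
    {a b : V} {p : G.Walk a b} (hp : IsMinPath G w p)
    (hsub : ∀ e ∈ p.edges, e ∈ H.edgeSet) : IsMinPath H w (p.transfer H hsub) := by
  refine ⟨hp.1.transfer _, fun q hq => ?_⟩
  rw [walkWeight_transfer]
  have hq' : ∀ e ∈ q.edges, e ∈ G.edgeSet :=
    fun e he => edgeSet_mono hle (q.edges_subset_edgeSet he)
  have := hp.2 (q.transfer G hq') (hq.transfer _)
  rwa [walkWeight_transfer] at this

lemma isMinPath_length_eq_dist (huhm : UniqueHopMinimal G w) {a b : V} {p : G.Walk a b}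
    (hp : IsMinPath G w p) : p.length = G.dist a b := by
  classical
  refine le_antisymm ?_ (SimpleGraph.dist_le p)
  obtain ⟨q, hq⟩ := SimpleGraph.Reachable.exists_walk_length_eq_dist ⟨p⟩
  calc p.length ≤ q.bypass.length := isMinPath_length_le huhm le_rfl hp q.bypass_isPath
    _ ≤ q.length := q.length_bypass_le
    _ = _ := hq

end Min

section Mval

/-- min hop-distance to `u` over the two endpoints of an edge. -/
noncomputable def mval (G : SimpleGraph V) (u : V) : Sym2 V → ℕ :=
  Sym2.lift ⟨fun x y => min (G.dist x u) (G.dist y u), fun _ _ => min_comm _ _⟩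

variable {w : Sym2 V → ℝ} {G : SimpleGraph V} {u : V}

lemma edges_map_mval (huhm : UniqueHopMinimal G w) (hnn : ∀ e ∈ G.edgeSet, 0 ≤ w e) :
    ∀ {x y : V} (p : G.Walk x y), IsMinPath G w p →
      p.edges.map (mval G y) = (List.range p.length).reverse := by
  intro x y p
  induction p with
  | nil => intro _; simp
  | @cons x z y hadj q ih =>
    intro hp
    have hq : IsMinPath G w q := by
      have h' : IsMinPath G w ((Walk.cons hadj Walk.nil).append q) := by
        simpa [Walk.cons_append] using hp
      exact isMinPath_of_append_right hnn h'
    have hdq : q.length = G.dist z y := isMinPath_length_eq_dist huhm hq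
    have hdp : q.length + 1 = G.dist x y := by
      have := isMinPath_length_eq_dist huhm hp
      simpa using this
    have hmv : mval G y s(x, z) = q.length := by
      simp only [mval, Sym2.lift_mk]
      rw [← hdq, ← hdp]
      simp
    simp only [Walk.edges_cons, List.map_cons, ih hq, hmv, Walk.length_cons,
      List.range_succ, List.reverse_append, List.reverse_cons, List.reverse_nil,
      List.nil_append, List.singleton_append]

lemma mval_lt_of_mem (huhm : UniqueHopMinimal G w) (hnn : ∀ e ∈ G.edgeSet, 0 ≤ w e)
    {x : V} {p : G.Walk x u} (hp : IsMinPath G w p) {f : Sym2 V} (hf : f ∈ p.edges) :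
    mval G u f < p.length := by
  have h1 := edges_map_mval huhm hnn p hp
  have h2 : mval G u f ∈ (List.range p.length).reverse := h1 ▸ List.mem_map_of_mem hf
  simpa using h2

lemma mval_injOn (huhm : UniqueHopMinimal G w) (hnn : ∀ e ∈ G.edgeSet, 0 ≤ w e)
    {x : V} {p : G.Walk x u} (hp : IsMinPath G w p) {f g : Sym2 V} (hf : f ∈ p.edges)
    (hg : g ∈ p.edges) (h : mval G u f = mval G u g) : f = g := by
  have hnd : (p.edges.map (mval G u)).Nodup := by
    rw [edges_map_mval huhm hnn p hp]
    exact List.nodup_reverse.2 List.nodup_range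
  exact List.inj_on_of_nodup_map hnd hf hg h

end Mval

section Split

open Classical in
/-- Split a walk at the first edge belonging to `T`: returns `⟨c, q₁, q₂⟩` with
`q₁.append q₂ = p`, all edges of `q₁` outside `T`, and `q₂` either nil or starting
with a `T`-edge. -/
noncomputable def dSplit (T : Set (Sym2 V)) {H : SimpleGraph V} :
    ∀ {a b : V}, H.Walk a b → (c : V) × H.Walk a c × H.Walk c b
  | a, _, Walk.nil => ⟨a, Walk.nil, Walk.nil⟩
  | a, b, @Walk.cons _ _ _ v _ hadj q =>
      if s(a, v) ∈ T then ⟨a, Walk.nil, Walk.cons hadj q⟩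
      else ⟨(dSplit T q).1, Walk.cons hadj (dSplit T q).2.1, (dSplit T q).2.2⟩

variable {T : Set (Sym2 V)} {H : SimpleGraph V}

lemma dSplit_append : ∀ {a b : V} (p : H.Walk a b),
    (dSplit T p).2.1.append (dSplit T p).2.2 = p := by
  intro a b p
  induction p with
  | nil => rfl
  | @cons x v y hadj q ih =>
    rw [dSplit]
    by_cases h : s(x, v) ∈ T
    · rw [if_pos h]; rfl
    · rw [if_neg h]
      show Walk.cons hadj ((dSplit T q).2.1.append (dSplit T q).2.2) = _
      rw [ih]

lemma dSplit_edges : ∀ {a b : V} (p : H.Walk a b), ∀ e ∈ (dSplit T p).2.1.edges, e ∉ T := by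
  intro a b p
  induction p with
  | nil => intro e he; rw [dSplit] at he; simp at he
  | @cons x v y hadj q ih =>
    rw [dSplit]
    by_cases h : s(x, v) ∈ T
    · rw [if_pos h]; intro e he; simp at he
    · rw [if_neg h]
      intro e he
      simp only [Walk.edges_cons, List.mem_cons] at he
      rcases he with rfl | he
      · exact h
      · exact ih e he

lemma dSplit_c : ∀ {a b : V} (p : H.Walk a b),
    (dSplit T p).1 = b ∨ ∃ g ∈ T, (dSplit T p).1 ∈ g := by
  intro a b p
  induction p with
  | nil => rw [dSplit]; exact Or.inl rfl
  | @cons x v y hadj q ih =>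
    rw [dSplit]
    by_cases h : s(x, v) ∈ T
    · rw [if_pos h]; exact Or.inr ⟨s(x, v), h, Sym2.mem_mk_left _ _⟩
    · rw [if_neg h]; exact ih

lemma dSplit_length_pos : ∀ {a b : V} (p : H.Walk a b) {e₀ : Sym2 V},
    p.edges.head? = some e₀ → e₀ ∉ T → 1 ≤ (dSplit T p).2.1.length := by
  intro a b p
  induction p with
  | nil => intro e₀ h; simp at h
  | @cons x v y hadj q ih =>
    intro e₀ h he₀
    simp only [Walk.edges_cons, List.head?_cons, Option.some.injEq] at h
    rw [dSplit, if_neg (h ▸ he₀)]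
    simp

end Split

section Data

variable (G : SimpleGraph V) (w : Sym2 V → ℝ) (S : Finset V) (u : V)

/-- Union of edge sets of shortest `s`–`u` paths over `s ∈ S`. -/
def tuEdges : Set (Sym2 V) :=
  {e | ∃ s ∈ S, ∃ R : G.Walk s u, IsMinPath G w R ∧ e ∈ R.edges}

/-- Data extracted for a new edge `e'`: a source, a fault on the source's shortest
path to `u`, the replacement path `P` ending with `e'`, and its maximal suffix
(reversed, `q1`) avoiding all tree edges. -/
structure NData (e' : Sym2 V) where
  s : V
  hs : s ∈ S
  f : Sym2 V
  hfT : f ∈ tuEdges G w S u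
  hfrho : ∃ R : G.Walk s u, IsMinPath G w R ∧ f ∈ R.edges
  c : V
  q1 : (G.deleteEdges {f}).Walk u c
  P : (G.deleteEdges {f}).Walk s u
  pre : (G.deleteEdges {f}).Walk s c
  hPmin : IsMinPath (G.deleteEdges {f}) w P
  hPlast : P.edges.getLast? = some e'
  hsplit : P = pre.append q1.reverse
  hq1T : ∀ e ∈ q1.edges, e ∉ tuEdges G w S u
  hlen1 : 1 ≤ q1.length
  hmle : mval G u f + 1 ≤ q1.length

variable {G w S u}
variable {e' : Sym2 V}

lemma NData.q1_path (d : NData G w S u e') : d.q1.IsPath := by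
  have h := d.hPmin.1
  rw [d.hsplit] at h
  exact (Walk.isPath_reverse_iff _).1 h.of_append_right

/-- The detour vertex set: support of `q1` except `u`. -/
noncomputable def NData.Vs (d : NData G w S u e') : Finset V := by
  classical exact d.q1.support.tail.toFinset

lemma NData.tail_nodup (d : NData G w S u e') : d.q1.support.tail.Nodup := by
  have h := d.q1_path.support_nodup
  rw [d.q1.support_eq_cons] at h
  exact (List.nodup_cons.1 h).2

lemma NData.card_Vs (d : NData G w S u e') : d.Vs.card = d.q1.length := by
  classical
  rw [NData.Vs, List.toFinset_card_of_nodup d.tail_nodup, List.length_tail,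
    Walk.length_support]
  rfl

lemma NData.suffix (d : NData G w S u e')
    (hnn : ∀ e ∈ (G.deleteEdges {d.f}).edgeSet, 0 ≤ w e)
    {z : V} (hz : z ∈ d.q1.support.tail) :
    z ≠ u ∧ ∃ A : (G.deleteEdges {d.f}).Walk z u, IsMinPath (G.deleteEdges {d.f}) w A ∧
      (∀ e ∈ A.edges, e ∉ tuEdges G w S u) ∧ A.edges.getLast? = some e' := by
  classical
  have hzu : z ≠ u := by
    have hsup := d.q1_path.support_nodup
    have hcons : d.q1.support = u :: d.q1.support.tail := d.q1.support_eq_cons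
    rw [hcons] at hsup
    intro h
    exact (List.nodup_cons.1 hsup).1 (h ▸ hz)
  have hz' : z ∈ d.q1.support := List.mem_of_mem_tail hz
  have hts : (d.q1.takeUntil z hz').append (d.q1.dropUntil z hz') = d.q1 :=
    Walk.take_spec _ hz'
  have hP : d.P = (d.pre.append (d.q1.dropUntil z hz').reverse).append
      (d.q1.takeUntil z hz').reverse := by
    rw [d.hsplit]
    conv_rhs => rw [← Walk.append_assoc, ← Walk.reverse_append, hts]
  refine ⟨hzu, (d.q1.takeUntil z hz').reverse, ?_, ?_, ?_⟩
  · have := d.hPmin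
    rw [hP] at this
    exact isMinPath_of_append_right hnn this
  · intro e he
    rw [Walk.edges_reverse, List.mem_reverse] at he
    exact d.hq1T e (Walk.edges_takeUntil_subset _ hz' he)
  · have hne : (d.q1.takeUntil z hz').reverse.edges ≠ [] :=
      edges_ne_nil_of_ne _ hzu
    have hPl := d.hPlast
    rw [hP, Walk.edges_append, getLast?_append_of_ne_nil hne] at hPl
    exact hPl

end Data

section Cross

variable {G : SimpleGraph V} {w : Sym2 V → ℝ} {S : Finset V} {u : V}

lemma disjoint_Vs (huhm : UniqueHopMinimal G w) (hnnG : ∀ e ∈ G.edgeSet, 0 ≤ w e)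
    {e₁ e₂ : Sym2 V} (d₁ : NData G w S u e₁) (d₂ : NData G w S u e₂) (hne : e₁ ≠ e₂) :
    Disjoint d₁.Vs d₂.Vs := by
  classical
  rw [Finset.disjoint_left]
  intro z hz₁ hz₂
  rw [NData.Vs, List.mem_toFinset] at hz₁ hz₂
  have hnn₁ : ∀ e ∈ (G.deleteEdges {d₁.f}).edgeSet, 0 ≤ w e :=
    fun e he => hnnG e (edgeSet_mono (deleteEdges_le _) he)
  have hnn₂ : ∀ e ∈ (G.deleteEdges {d₂.f}).edgeSet, 0 ≤ w e :=
    fun e he => hnnG e (edgeSet_mono (deleteEdges_le _) he)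
  obtain ⟨hzu, A₁, hA₁min, hA₁T, hA₁last⟩ := d₁.suffix hnn₁ hz₁
  obtain ⟨-, A₂, hA₂min, hA₂T, hA₂last⟩ := d₂.suffix hnn₂ hz₂
  have hsub₂₁ : ∀ e ∈ A₂.edges, e ∈ (G.deleteEdges {d₁.f}).edgeSet := by
    intro e he
    rw [edgeSet_deleteEdges]
    refine ⟨edgeSet_mono (deleteEdges_le _) (A₂.edges_subset_edgeSet he), ?_⟩
    simp only [Set.mem_singleton_iff]
    rintro rfl
    exact hA₂T _ he d₁.hfT
  have hsub₁₂ : ∀ e ∈ A₁.edges, e ∈ (G.deleteEdges {d₂.f}).edgeSet := by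
    intro e he
    rw [edgeSet_deleteEdges]
    refine ⟨edgeSet_mono (deleteEdges_le _) (A₁.edges_subset_edgeSet he), ?_⟩
    simp only [Set.mem_singleton_iff]
    rintro rfl
    exact hA₁T _ he d₂.hfT
  have h1 : walkWeight w A₁ ≤ walkWeight w A₂ := by
    have := hA₁min.2 (A₂.transfer _ hsub₂₁) (hA₂min.1.transfer _)
    rwa [walkWeight_transfer] at this
  have h2 : walkWeight w A₂ ≤ walkWeight w A₁ := by
    have := hA₂min.2 (A₁.transfer _ hsub₁₂) (hA₁min.1.transfer _)
    rwa [walkWeight_transfer] at this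
  have heq : walkWeight w A₁ = walkWeight w A₂ := le_antisymm h1 h2
  have hBtmin : IsMinPath (G.deleteEdges {d₁.f}) w (A₂.transfer _ hsub₂₁) := by
    refine ⟨hA₂min.1.transfer _, fun r hr => ?_⟩
    rw [walkWeight_transfer, ← heq]
    exact hA₁min.2 r hr
  have hAeq : A₁ = A₂.transfer _ hsub₂₁ :=
    isMinPath_unique huhm (deleteEdges_le _) hA₁min hBtmin
  have hEeq : A₁.edges = A₂.edges := by rw [hAeq, Walk.edges_transfer]
  apply hne
  have := hA₁last
  rw [hEeq, hA₂last] at this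
  exact (Option.some.inj this).symm

lemma eq_of_same_source_mval (huhm : UniqueHopMinimal G w)
    (hnnG : ∀ e ∈ G.edgeSet, 0 ≤ w e) {e₁ e₂ : Sym2 V}
    (d₁ : NData G w S u e₁) (d₂ : NData G w S u e₂) (hs : d₁.s = d₂.s)
    (hm : mval G u d₁.f = mval G u d₂.f) : e₁ = e₂ := by
  obtain ⟨s₁, hs₁, f₁, hfT₁, hfrho₁, c₁, q₁, P₁, pre₁, hmin₁, hlast₁, hsp₁, hT₁, hl₁, hm₁⟩ := d₁
  obtain ⟨s₂, hs₂, f₂, hfT₂, hfrho₂, c₂, q₂, P₂, pre₂, hmin₂, hlast₂, hsp₂, hT₂, hl₂, hm₂⟩ := d₂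
  simp only at hs hm
  subst hs
  obtain ⟨R₁, hR₁, hf₁⟩ := hfrho₁
  obtain ⟨R₂, hR₂, hf₂⟩ := hfrho₂
  have hReq : R₁ = R₂ := isMinPath_unique huhm le_rfl hR₁ hR₂
  subst hReq
  have hfeq : f₁ = f₂ := mval_injOn huhm hnnG hR₁ hf₁ hf₂ hm
  subst hfeq
  have hPeq : P₁ = P₂ := isMinPath_unique huhm (deleteEdges_le _) hmin₁ hmin₂
  rw [hPeq, hlast₂] at hlast₁
  exact (Option.some.inj hlast₁).symm

end Cross

section Construct

variable {G : SimpleGraph V} {w : Sym2 V → ℝ} {S : Finset V} {u : V}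

lemma exists_nData (hpos : ∀ e ∈ G.edgeSet, 0 < w e) (huhm : UniqueHopMinimal G w)
    (hconn : ∀ s ∈ S, G.Reachable s u) :
    ∀ e' ∈ newEdgesMulti G w (S : Set V) u, Nonempty (NData G w S u e') := by
  classical
  intro e' he'
  obtain ⟨hnot, s, hsS', hsu, f, hfbfs, P, hPmin, hPlast⟩ := he'
  have hsS : s ∈ S := by simpa using hsS'
  have hle : G.deleteEdges {f} ≤ G := deleteEdges_le _
  have hnnG : ∀ e ∈ G.edgeSet, 0 ≤ w e := fun e he => (hpos e he).le
  have hnnH : ∀ e ∈ (G.deleteEdges {f}).edgeSet, 0 ≤ w e :=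
    fun e he => hnnG e (edgeSet_mono hle he)
  obtain ⟨ρ, hρ⟩ := exists_isMinPath huhm le_rfl (hconn s hsS)
  have he'T : e' ∉ tuEdges G w S u := by
    rintro ⟨s'', hs'', R, hR, heR⟩
    exact hnot s'' (by simpa using hs'') ⟨u, R, hR, heR⟩
  -- the fault lies on the shortest s-u path
  have hfρ : f ∈ ρ.edges := by
    by_contra hfρ
    have hsub : ∀ e ∈ ρ.edges, e ∈ (G.deleteEdges {f}).edgeSet := by
      intro e he
      rw [edgeSet_deleteEdges]
      refine ⟨ρ.edges_subset_edgeSet he, ?_⟩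
      simp only [Set.mem_singleton_iff]
      rintro rfl
      exact hfρ he
    have hmin' := isMinPath_transfer huhm hle hρ hsub
    have hPeq : P = ρ.transfer _ hsub := isMinPath_unique huhm hle hPmin hmin'
    have he'ρ : e' ∈ ρ.edges := by
      apply mem_of_getLast?'
      rw [← Walk.edges_transfer ρ hsub, ← hPeq]
      exact hPlast
    exact he'T ⟨s, hsS, ρ, hρ, he'ρ⟩
  have hfT : f ∈ tuEdges G w S u := ⟨s, hsS, ρ, hρ, hfρ⟩
  -- split the reversed path at the first tree edge
  set rev := P.reverse with hrevdef
  set spl := dSplit (tuEdges G w S u) rev with hspldef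
  have hds : spl.2.1.append spl.2.2 = rev := dSplit_append rev
  have hsplit : P = spl.2.2.reverse.append spl.2.1.reverse := by
    rw [← Walk.reverse_reverse P, ← hrevdef, ← hds, Walk.reverse_append]
  have hq1T : ∀ e ∈ spl.2.1.edges, e ∉ tuEdges G w S u := fun e he => dSplit_edges rev e he
  have hrevhead : rev.edges.head? = some e' := by
    rw [hrevdef, Walk.edges_reverse, List.head?_reverse]
    exact hPlast
  have hlen1 : 1 ≤ spl.2.1.length := dSplit_length_pos rev hrevhead he'T
  -- the suffix of P is min
  have hPmin' : IsMinPath (G.deleteEdges {f}) w (spl.2.2.reverse.append spl.2.1.reverse) := by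
    rw [← hsplit]; exact hPmin
  have hA0min : IsMinPath (G.deleteEdges {f}) w spl.2.1.reverse :=
    isMinPath_of_append_right hnnH hPmin'
  have hA0ne : spl.2.1.reverse.edges ≠ [] := by
    apply List.ne_nil_of_length_pos
    rw [Walk.length_edges, Walk.length_reverse]
    omega
  have hA0last : spl.2.1.reverse.edges.getLast? = some e' := by
    have hPedges : P.edges = spl.2.2.reverse.edges ++ spl.2.1.reverse.edges := by
      rw [hsplit, Walk.edges_append]
    have := hPlast
    rwa [hPedges, getLast?_append_of_ne_nil hA0ne] at this
  -- hop distance bound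
  have hsubG : ∀ e ∈ spl.2.1.reverse.edges, e ∈ G.edgeSet :=
    fun e he => edgeSet_mono hle (Walk.edges_subset_edgeSet _ he)
  have hdist : G.dist spl.1 u ≤ spl.2.1.length := by
    have := SimpleGraph.dist_le ((spl.2.1.reverse).transfer G hsubG)
    rwa [Walk.length_transfer, Walk.length_reverse] at this
  -- the key length bound
  have hmle : mval G u f + 1 ≤ spl.2.1.length := by
    rcases dSplit_c rev with hcs | ⟨g, hgT, hcg⟩
    · -- the whole path avoids tree edges
      have h1 : mval G u f < ρ.length := mval_lt_of_mem huhm hnnG hρ hfρ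
      rw [isMinPath_length_eq_dist huhm hρ] at h1
      have hdd : G.dist s u = G.dist spl.1 u := by rw [hcs]
      omega
    · obtain ⟨s'', hs''S, R, hRmin, hgR⟩ := hgT
      have hcsup : spl.1 ∈ R.support := mem_support_of_mem_sym2 hgR hcg
      have hRsp : (R.takeUntil _ hcsup).append (R.dropUntil _ hcsup) = R :=
        Walk.take_spec _ hcsup
      have hσmin : IsMinPath G w (R.dropUntil _ hcsup) := by
        apply isMinPath_of_append_right hnnG (p := R.takeUntil _ hcsup)
        rw [hRsp]
        exact hRmin
      by_cases hfσ : f ∈ (R.dropUntil _ hcsup).edges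
      · have h1 : mval G u f < (R.dropUntil _ hcsup).length :=
          mval_lt_of_mem huhm hnnG hσmin hfσ
        rw [isMinPath_length_eq_dist huhm hσmin] at h1
        omega
      · exfalso
        have hσsub : ∀ e ∈ (R.dropUntil _ hcsup).edges, e ∈ (G.deleteEdges {f}).edgeSet := by
          intro e he
          rw [edgeSet_deleteEdges]
          refine ⟨Walk.edges_subset_edgeSet _ he, ?_⟩
          simp only [Set.mem_singleton_iff]
          rintro rfl
          exact hfσ he
        have hσmin' := isMinPath_transfer huhm hle hσmin hσsub
        have hAeq : spl.2.1.reverse = (R.dropUntil _ hcsup).transfer _ hσsub :=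
          isMinPath_unique huhm hle hA0min hσmin'
        have he'σ : e' ∈ (R.dropUntil _ hcsup).edges := by
          apply mem_of_getLast?'
          rw [← Walk.edges_transfer _ hσsub, ← hAeq]
          exact hA0last
        exact he'T ⟨s'', hs''S, R, hRmin, Walk.edges_dropUntil_subset _ hcsup he'σ⟩
  exact ⟨⟨s, hsS, f, hfT, ⟨ρ, hρ, hfρ⟩, spl.1, spl.2.1, P, spl.2.2.reverse,
    hPmin, hPlast, hsplit, hq1T, hlen1, hmle⟩⟩

end Construct

section Count

lemma sum_distinct_pos (T : Finset ℕ) (h : ∀ x ∈ T, 1 ≤ x) :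
    T.card * (T.card + 1) ≤ 2 * ∑ x ∈ T, x := by
  induction T using Finset.induction_on_max with
  | empty => simp
  | insert a s ha ih =>
    have h1 : ∀ x ∈ s, 1 ≤ x := fun x hx => h x (Finset.mem_insert_of_mem hx)
    have has : a ∉ s := fun hmem => lt_irrefl a (ha a hmem)
    have ha1 : 1 ≤ a := h a (Finset.mem_insert_self _ _)
    have hcard : s.card < a := by
      have hsub : s ⊆ Finset.Ico 1 a := fun x hx => Finset.mem_Ico.2 ⟨h1 x hx, ha x hx⟩
      have := Finset.card_le_card hsub
      rw [Nat.card_Ico] at this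
      omega
    have ihs := ih h1
    rw [Finset.sum_insert has, Finset.card_insert_of_notMem has]
    nlinarith
end Count

end NewEdgesProof


open NewEdgesProof in
/-- For a set `S` of `σ` sources, `|New(S,u)| ≤ σ + √(2·σ·n)`. -/
theorem newEdgesMulti_card_le {V : Type*} [Fintype V]
    (G : SimpleGraph V) (w : Sym2 V → ℝ)
    (hpos : ∀ e ∈ G.edgeSet, 0 < w e) (huhm : UniqueHopMinimal G w)
    (S : Finset V) (σ : ℕ) (hσ : S.card = σ)
    (u : V) (hconn : ∀ s ∈ S, G.Reachable s u) :
    ((newEdgesMulti G w (S : Set V) u).ncard : ℝ) ≤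
      (σ : ℝ) + Real.sqrt (2 * (σ : ℝ) * (Fintype.card V : ℝ)) := by
  classical
  subst hσ
  have hfin : (newEdgesMulti G w (S : Set V) u).Finite := Set.toFinite _
  set NF : Finset (Sym2 V) := hfin.toFinset with hNFdef
  have hmemNF : ∀ {e' : Sym2 V}, e' ∈ NF ↔ e' ∈ newEdgesMulti G w (S : Set V) u :=
    fun {e'} => Set.Finite.mem_toFinset _
  have hncard : (newEdgesMulti G w (S : Set V) u).ncard = NF.card := by
    rw [hNFdef]
    exact Set.ncard_eq_toFinset_card _ hfin
  have hex : ∀ e' ∈ NF, NData G w S u e' :=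
    fun e' h => Classical.choice (exists_nData hpos huhm hconn e' (hmemNF.1 h))
  set src : Sym2 V → V := fun e' => if h : e' ∈ NF then (hex e' h).s else u with hsrcdef
  set mv : Sym2 V → ℕ := fun e' => if h : e' ∈ NF then mval G u (hex e' h).f else 0
    with hmvdef
  set tv : Sym2 V → ℕ := fun e' => if h : e' ∈ NF then (hex e' h).q1.length else 0
    with htvdef
  set VS : Sym2 V → Finset V := fun e' => if h : e' ∈ NF then (hex e' h).Vs else ∅
    with hVSdef
  have hnnG : ∀ e ∈ G.edgeSet, 0 ≤ w e := fun e he => (hpos e he).le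
  have hsrcS : ∀ e' ∈ NF, src e' ∈ S := by
    intro e' h
    rw [hsrcdef]
    simp only [dif_pos h]
    exact (hex e' h).hs
  have hVScard : ∀ e' ∈ NF, (VS e').card = tv e' := by
    intro e' h
    rw [hVSdef, htvdef]
    simp only [dif_pos h]
    exact (hex e' h).card_Vs
  have hmle : ∀ e' ∈ NF, mv e' + 1 ≤ tv e' := by
    intro e' h
    rw [hmvdef, htvdef]
    simp only [dif_pos h]
    exact (hex e' h).hmle
  have hdisj : ∀ e₁ ∈ NF, ∀ e₂ ∈ NF, e₁ ≠ e₂ → Disjoint (VS e₁) (VS e₂) := by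
    intro e₁ h₁ e₂ h₂ hne
    rw [hVSdef]
    simp only [dif_pos h₁, dif_pos h₂]
    exact disjoint_Vs huhm hnnG (hex e₁ h₁) (hex e₂ h₂) hne
  have hinj : ∀ e₁ ∈ NF, ∀ e₂ ∈ NF, src e₁ = src e₂ → mv e₁ = mv e₂ → e₁ = e₂ := by
    intro e₁ h₁ e₂ h₂ hs hm
    rw [hsrcdef] at hs
    rw [hmvdef] at hm
    simp only [dif_pos h₁, dif_pos h₂] at hs hm
    exact eq_of_same_source_mval huhm hnnG (hex e₁ h₁) (hex e₂ h₂) hs hm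
  -- total size of disjoint detour vertex sets
  have hsum_tv : ∑ e' ∈ NF, tv e' ≤ Fintype.card V := by
    calc ∑ e' ∈ NF, tv e' = ∑ e' ∈ NF, (VS e').card :=
          Finset.sum_congr rfl (fun e' h => (hVScard e' h).symm)
      _ = (NF.biUnion VS).card := (Finset.card_biUnion hdisj).symm
      _ ≤ Fintype.card V := by
          rw [← Finset.card_univ]
          exact Finset.card_le_card (Finset.subset_univ _)
  -- fiberwise decomposition by source
  have hfib : NF.card = ∑ s ∈ S, (NF.filter (fun e' => src e' = s)).card :=
    Finset.card_eq_sum_card_fiberwise hsrcS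
  -- per-source bound
  have hper : ∀ s ∈ S, (NF.filter (fun e' => src e' = s)).card ^ 2 ≤
      2 * ∑ e' ∈ NF.filter (fun e' => src e' = s), tv e' := by
    intro s hs
    set Ns := NF.filter (fun e' => src e' = s) with hNs
    have hNssub : ∀ e' ∈ Ns, e' ∈ NF := fun e' h => (Finset.mem_filter.1 h).1
    have hinj' : ∀ e₁ ∈ Ns, ∀ e₂ ∈ Ns, mv e₁ + 1 = mv e₂ + 1 → e₁ = e₂ := by
      intro e₁ h₁ e₂ h₂ hmeq
      obtain ⟨h₁', hs₁⟩ := Finset.mem_filter.1 h₁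
      obtain ⟨h₂', hs₂⟩ := Finset.mem_filter.1 h₂
      exact hinj e₁ h₁' e₂ h₂' (hs₁.trans hs₂.symm) (by omega)
    have hI : (Ns.image (fun e' => mv e' + 1)).card = Ns.card :=
      Finset.card_image_of_injOn hinj'
    have hIpos : ∀ x ∈ Ns.image (fun e' => mv e' + 1), 1 ≤ x := by
      intro x hx
      obtain ⟨e', -, rfl⟩ := Finset.mem_image.1 hx
      omega
    have hsum1 := sum_distinct_pos _ hIpos
    rw [hI] at hsum1
    have hsum2 : ∑ x ∈ Ns.image (fun e' => mv e' + 1), x = ∑ e' ∈ Ns, (mv e' + 1) :=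
      Finset.sum_image hinj'
    have hsum3 : ∑ e' ∈ Ns, (mv e' + 1) ≤ ∑ e' ∈ Ns, tv e' :=
      Finset.sum_le_sum (fun e' h => hmle e' (hNssub e' h))
    have : Ns.card * (Ns.card + 1) ≤ 2 * ∑ e' ∈ Ns, tv e' := by omega
    nlinarith [this]
  -- Cauchy–Schwarz
  have hCS : NF.card ^ 2 ≤ S.card * ∑ s ∈ S, (NF.filter (fun e' => src e' = s)).card ^ 2 := by
    have := Finset.sum_mul_sq_le_sq_mul_sq S (fun _ => 1)
      (fun s => (NF.filter (fun e' => src e' = s)).card)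
    simp only [one_mul, one_pow] at this
    rw [Finset.sum_const, smul_eq_mul, mul_one] at this
    rw [hfib]
    exact this
  have hsum4 : ∑ s ∈ S, (NF.filter (fun e' => src e' = s)).card ^ 2 ≤
      2 * Fintype.card V := by
    calc ∑ s ∈ S, (NF.filter (fun e' => src e' = s)).card ^ 2
        ≤ ∑ s ∈ S, 2 * ∑ e' ∈ NF.filter (fun e' => src e' = s), tv e' :=
          Finset.sum_le_sum hper
      _ = 2 * ∑ s ∈ S, ∑ e' ∈ NF.filter (fun e' => src e' = s), tv e' := by
          rw [Finset.mul_sum]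
      _ = 2 * ∑ e' ∈ NF, tv e' := by
          rw [Finset.sum_fiberwise_of_maps_to hsrcS]
      _ ≤ 2 * Fintype.card V := by omega
  have hk2 : NF.card ^ 2 ≤ S.card * (2 * Fintype.card V) := by
    calc NF.card ^ 2 ≤ S.card * ∑ s ∈ S, (NF.filter (fun e' => src e' = s)).card ^ 2 := hCS
      _ ≤ S.card * (2 * Fintype.card V) := Nat.mul_le_mul_left _ hsum4
  -- real arithmetic
  rw [hncard]
  have hk2R : (NF.card : ℝ) ^ 2 ≤ 2 * (S.card : ℝ) * (Fintype.card V : ℝ) := by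
    have := hk2
    have h' : (NF.card ^ 2 : ℝ) ≤ (S.card * (2 * Fintype.card V) : ℕ) := by
      exact_mod_cast this
    push_cast at h' ⊢
    linarith
  have hsqrt : (NF.card : ℝ) ≤ Real.sqrt (2 * (S.card : ℝ) * (Fintype.card V : ℝ)) := by
    rw [Real.le_sqrt (by positivity) (by positivity)]
    exact hk2R
  have h0 : (0 : ℝ) ≤ (S.card : ℝ) := Nat.cast_nonneg _
  linarith
end
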